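/- arXiv:2212.07361 — 10 statements merged into one kernel-verified Lean document; each statement's English description precedes it below -/
import Mathlib

section
/- If (X,r) is a left non-degenerate idempotent set-theoretic solution of the Yang–Baxter equation, then for all x,y ∈ X, ρ_y(x) = q(λ_x(y)), where q(z) = λ_z^{-1}(z); hence r(x,y) = (λ_x(y), q(λ_x(y))). -/
open Function

variable {X : Type*}

def lam (r : X × X → X × X) (x y : X) : X := (r (x, y)).1

def rho (r : X × X → X × X) (y x : X) : X := (r (x, y)).2

/-- `r × id` acting on triples. -/
def rl (r : X × X → X × X) : X × X × X → X × X × X :=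
  fun p => ((r (p.1, p.2.1)).1, (r (p.1, p.2.1)).2, p.2.2)

/-- `id × r` acting on triples. -/
def rr (r : X × X → X × X) : X × X × X → X × X × X :=
  fun p => (p.1, r (p.2.1, p.2.2))

/-- the Yang–Baxter (braid) equation for a set-theoretic map. -/
def YB (r : X × X → X × X) : Prop :=
  rl r ∘ rr r ∘ rl r = rr r ∘ rl r ∘ rr r

/-- the relation `x + y = y + y` on the free monoid. -/
def simpleRel (X : Type*) : FreeMonoid X → FreeMonoid X → Prop :=
  fun a b => ∃ x y : X, a = FreeMonoid.of x * FreeMonoid.of y ∧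
    b = FreeMonoid.of y * FreeMonoid.of y

/-- the derived structure monoid `A(X,r)` of a left non-degenerate idempotent solution. -/
abbrev DerMon (X : Type*) := (conGen (simpleRel X)).Quotient

def dof (x : X) : DerMon X := (conGen (simpleRel X)).mk' (FreeMonoid.of x)

/-- the diagonal map `q(x) = λ_x⁻¹(x)`. -/
def qmap (L : DerMon X → Equiv.Perm X) (x : X) : X := (L (dof x))⁻¹ x

/-- the product of the structure semigroup realised on pairs `(a, λ_a)`. -/
def sop (L : DerMon X → Equiv.Perm X) (act : Equiv.Perm X → DerMon X →* DerMon X)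
    (a b : DerMon X) : DerMon X := a * act (L a) b

/-- the component `S_u = {(a,λ_a) : λ_a⁻¹(a) = |a|·u}`. -/
def Su (L : DerMon X → Equiv.Perm X) (act : Equiv.Perm X → DerMon X →* DerMon X)
    (len : DerMon X → ℕ) (u : X) : Set (DerMon X) :=
  {a | a ≠ 1 ∧ act (L a)⁻¹ a = dof u ^ len a}

/-- `X_u = {x ∈ X : λ_{dx}(u) = x}`. -/
def Xu (L : DerMon X → Equiv.Perm X) (d : ℕ) (u : X) : Set X :=
  {x | L (dof x ^ d) u = x}

/-- For a left non-degenerate idempotent solution, `ρ_y(x) = q(λ_x(y))` where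
`q(z) = λ_z⁻¹(z)`; hence `r(x,y) = (λ_x(y), q(λ_x(y)))`. -/
theorem statement1 {X : Type*} (r : X × X → X × X) (hYB : YB r)
    (hnd : ∀ x : X, Function.Bijective (lam r x)) (hidem : r ∘ r = r)
    (q : X → X) (hq : ∀ z : X, lam r z (q z) = z) :
    ∀ x y : X, rho r y x = q (lam r x y) ∧ r (x, y) = (lam r x y, q (lam r x y)) := by
  intro x y
  have hfix : r (lam r x y, rho r y x) = r (x, y) := by
    have := congrFun hidem (x, y)
    simpa [lam, rho, Function.comp] using this
  have h1 : lam r (lam r x y) (rho r y x) = lam r x y := by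
    simpa [lam] using congrArg Prod.fst hfix
  have hv : rho r y x = q (lam r x y) :=
    (hnd (lam r x y)).1 (by rw [h1, hq])
  refine ⟨hv, ?_⟩
  have : r (x, y) = (lam r x y, rho r y x) := rfl
  rw [this, hv]
end

section
/- If (X,r) is a left non-degenerate idempotent solution, then the derived structure monoid A(X,r) has presentation ⟨x ∈ X | x + y = y + y for all x,y ∈ X⟩; consequently every element of A(X,r) is uniquely determined by its length and its last letter, and A(X,r) is left cancellative. -/
open Function

variable {X : Type*}

/-- the defining relation `x + y = y + σ_y(x)` of the derived structure monoid,
where `σ_y(x) = λ_y(ρ_{λ_x⁻¹(y)}(x))`. -/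
def derivedRel (r : X × X → X × X) (lamInv : X → X → X) :
    FreeMonoid X → FreeMonoid X → Prop :=
  fun a b => ∃ x y : X, a = FreeMonoid.of x * FreeMonoid.of y ∧
    b = FreeMonoid.of y * FreeMonoid.of (lam r y (rho r (lamInv x y) x))


/-- the congruence "same length and same last letter". -/
def lenLastCon (X : Type*) : Con (FreeMonoid X) where
  r w v := w.length = v.length ∧ w.toList.getLast? = v.toList.getLast?
  iseqv := ⟨fun _ => ⟨rfl, rfl⟩, fun h => ⟨h.1.symm, h.2.symm⟩,
    fun h h' => ⟨h.1.trans h'.1, h.2.trans h'.2⟩⟩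
  mul' := by
    rintro w w' x x' ⟨hl, hg⟩ ⟨hl', hg'⟩
    refine ⟨by simp [FreeMonoid.length_mul, hl, hl'], ?_⟩
    rcases eq_or_ne x 1 with rfl | hx
    · have hx' : x' = 1 := by
        have : x'.length = 0 := hl'.symm
        exact FreeMonoid.length_eq_zero.mp this
      subst hx'
      simpa using hg
    · have hx' : x' ≠ 1 := fun h => hx (FreeMonoid.length_eq_zero.mp (hl'.trans (by simp [h])))
      have hxl : x.toList ≠ [] := fun h => hx (by
        have : x.length = 0 := by simpa [FreeMonoid.length] using congrArg List.length h
        exact FreeMonoid.length_eq_zero.mp this)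
      have hxl' : x'.toList ≠ [] := fun h => hx' (by
        have : x'.length = 0 := by simpa [FreeMonoid.length] using congrArg List.length h
        exact FreeMonoid.length_eq_zero.mp this)
      show ((w * x).toList).getLast? = ((w' * x').toList).getLast?
      rw [FreeMonoid.toList_mul, FreeMonoid.toList_mul,
        List.getLast?_append_of_ne_nil _ hxl, List.getLast?_append_of_ne_nil _ hxl']
      exact hg'

lemma conGen_le_lenLast : conGen (simpleRel X) ≤ lenLastCon X := by
  apply Con.conGen_le.mpr
  rintro a b ⟨x, y, rfl, rfl⟩
  constructor <;> rfl

lemma toList_ne_nil {w : FreeMonoid X} (h : w ≠ 1) : w.toList ≠ [] := by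
  intro hn
  apply h
  apply FreeMonoid.length_eq_zero.mp
  simpa [FreeMonoid.length] using congrArg List.length hn

lemma ofList_cons' (a : X) (l : List X) :
    FreeMonoid.ofList (a :: l) = FreeMonoid.of a * FreeMonoid.ofList l := rfl

lemma toPow : ∀ (l : List X) (y : X), l.getLast? = some y →
    conGen (simpleRel X) (FreeMonoid.ofList l) (FreeMonoid.of y ^ l.length)
  | [], y, h => by simp at h
  | [a], y, h => by
    simp only [List.getLast?_singleton, Option.some.injEq] at h
    subst h
    simpa using (conGen (simpleRel X)).refl (FreeMonoid.of a)
  | a :: b :: t, y, h => by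
    have hh : (b :: t).getLast? = some y := by
      rw [← h]; exact (List.getLast?_cons_cons ..).symm
    have ih := toPow (b :: t) y hh
    have h1 : conGen (simpleRel X) (FreeMonoid.ofList (a :: b :: t))
        (FreeMonoid.of a * FreeMonoid.of y ^ (b :: t).length) := by
      rw [ofList_cons']
      exact (conGen (simpleRel X)).mul ((conGen (simpleRel X)).refl _) ih
    refine (conGen (simpleRel X)).trans h1 ?_
    have hn : (b :: t).length = t.length + 1 := rfl
    rw [hn, pow_succ']
    have base : conGen (simpleRel X) (FreeMonoid.of a * FreeMonoid.of y)
        (FreeMonoid.of y * FreeMonoid.of y) := ConGen.Rel.of _ _ ⟨a, y, rfl, rfl⟩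
    have step : conGen (simpleRel X)
        (FreeMonoid.of a * (FreeMonoid.of y * FreeMonoid.of y ^ t.length))
        (FreeMonoid.of y * FreeMonoid.of y * FreeMonoid.of y ^ t.length) := by
      rw [← mul_assoc]
      exact (conGen (simpleRel X)).mul base ((conGen (simpleRel X)).refl _)
    have heq : FreeMonoid.of y * FreeMonoid.of y * FreeMonoid.of y ^ t.length
        = FreeMonoid.of y ^ (a :: b :: t).length := by
      rw [mul_assoc, ← pow_succ', ← pow_succ']
      rfl
    rw [← heq]
    exact step

lemma getLast?_exists {w : FreeMonoid X} (h : w ≠ 1) : ∃ y, w.toList.getLast? = some y := by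
  cases hl : w.toList.getLast? with
  | none => exact absurd (List.getLast?_eq_none_iff.mp hl) (toList_ne_nil h)
  | some y => exact ⟨y, rfl⟩

lemma charac (w v : FreeMonoid X) (hw : w ≠ 1) (hv : v ≠ 1) :
    (conGen (simpleRel X)) w v ↔
      w.length = v.length ∧ w.toList.getLast? = v.toList.getLast? := by
  constructor
  · exact fun h => conGen_le_lenLast h
  · rintro ⟨hl, hg⟩
    obtain ⟨y, hy⟩ := getLast?_exists hw
    have hw' := toPow w.toList y hy
    have hv' := toPow v.toList y (hg ▸ hy)
    rw [FreeMonoid.ofList_toList] at hw' hv'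
    have hll : w.toList.length = v.toList.length := hl
    rw [hll] at hw'
    exact (conGen (simpleRel X)).trans hw' ((conGen (simpleRel X)).symm hv')

/-- For a left non-degenerate idempotent solution, the derived structure monoid has
presentation `⟨x ∈ X | x + y = y + y⟩`; every element is uniquely determined by its
length and last letter, and it is left cancellative. -/
theorem statement2 {X : Type*} (r : X × X → X × X) (hYB : YB r)
    (lamInv : X → X → X)
    (hinv : ∀ x : X, Function.LeftInverse (lamInv x) (lam r x) ∧
      Function.RightInverse (lamInv x) (lam r x))
    (hidem : r ∘ r = r) :
    conGen (derivedRel r lamInv) = conGen (simpleRel X) ∧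
    (∀ w v : FreeMonoid X, w ≠ 1 → v ≠ 1 →
      ((conGen (simpleRel X)) w v ↔
        w.length = v.length ∧ w.toList.getLast? = v.toList.getLast?)) ∧
    (∀ a b c : DerMon X, a * b = a * c → b = c) := by
  have key : ∀ x y : X, lam r y (rho r (lamInv x y) x) = y := by
    intro x y
    have h0 : r (x, lamInv x y) = (y, rho r (lamInv x y) x) :=
      Prod.ext ((hinv x).2 y) rfl
    have h2 : r (r (x, lamInv x y)) = r (x, lamInv x y) := congrFun hidem _
    rw [h0] at h2
    exact congrArg Prod.fst h2
  refine ⟨?_, fun w v hw hv => charac w v hw hv, ?_⟩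
  · have hrel : derivedRel r lamInv = simpleRel X := by
      funext a b
      apply propext
      constructor
      · rintro ⟨x, y, rfl, rfl⟩
        exact ⟨x, y, rfl, by rw [key]⟩
      · rintro ⟨x, y, rfl, rfl⟩
        exact ⟨x, y, rfl, by rw [key]⟩
    rw [hrel]
  · intro a b c
    refine Con.induction_on a fun wa => Con.induction_on b fun wb =>
      Con.induction_on c fun wc h => ?_
    rw [← Con.coe_mul, ← Con.coe_mul] at h
    have hc := (Con.eq _).mp h
    obtain ⟨hl, hg⟩ := conGen_le_lenLast hc
    have hlbc : wb.length = wc.length := by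
      have := hl
      simp only [FreeMonoid.length_mul] at this
      omega
    rcases eq_or_ne wb 1 with rfl | hb
    · have : wc = 1 := FreeMonoid.length_eq_zero.mp (by simpa using hlbc.symm)
      subst this
      rfl
    · have hcne : wc ≠ 1 := fun hh =>
        hb (FreeMonoid.length_eq_zero.mp (hlbc.trans (by simp [hh])))
      have hgg : wb.toList.getLast? = wc.toList.getLast? := by
        have := hg
        rwa [FreeMonoid.toList_mul, FreeMonoid.toList_mul,
          List.getLast?_append_of_ne_nil _ (toList_ne_nil hb),
          List.getLast?_append_of_ne_nil _ (toList_ne_nil hcne)] at this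
      exact (Con.eq _).mpr ((charac wb wc hb hcne).mpr ⟨hlbc, hgg⟩)
end

section
/- In the monoid A = ⟨x ∈ X | x + y = y + y, x,y ∈ X⟩ with X finite, if a, b ∈ A have equal length and λ_a(x) = λ_b(x) for some x ∈ X, then λ_a = λ_b. In particular, for two length-preserving permutation actions satisfying λ_{a+λ_a(b)} = λ_a ∘ λ_b, λ_a λ_b^{-1} is either the identity or fixed-point free on X. -/
open Function

variable {X : Type*}

lemma aux_base (x t : X) (m : ℕ) :
    conGen (simpleRel X) (FreeMonoid.of x * FreeMonoid.of t ^ (m+1))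
      (FreeMonoid.of t ^ (m+2)) := by
  have h : ConGen.Rel (simpleRel X)
      ((FreeMonoid.of x * FreeMonoid.of t) * FreeMonoid.of t ^ m)
      ((FreeMonoid.of t * FreeMonoid.of t) * FreeMonoid.of t ^ m) :=
    ConGen.Rel.mul (ConGen.Rel.of _ _ ⟨x, t, rfl, rfl⟩) (ConGen.Rel.refl _)
  have e1 : FreeMonoid.of x * FreeMonoid.of t ^ (m+1)
      = (FreeMonoid.of x * FreeMonoid.of t) * FreeMonoid.of t ^ m := by
    rw [pow_succ', ← mul_assoc]
  have e2 : (FreeMonoid.of t ^ (m+2) : FreeMonoid X)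
      = (FreeMonoid.of t * FreeMonoid.of t) * FreeMonoid.of t ^ m := by
    rw [show m + 2 = 1 + 1 + m by ring, pow_add, pow_add, pow_one]
  rw [e1, e2]
  exact h

lemma aux_main (w : FreeMonoid X) (t : X) :
    conGen (simpleRel X) (w * FreeMonoid.of t) (FreeMonoid.of t ^ (w.length + 1)) := by
  induction w using FreeMonoid.recOn with
  | one => simpa using (conGen (simpleRel X)).refl _
  | of_mul x w ih =>
      have h1 : conGen (simpleRel X) (FreeMonoid.of x * w * FreeMonoid.of t)
          (FreeMonoid.of x * FreeMonoid.of t ^ (w.length + 1)) := by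
        rw [mul_assoc]
        exact ConGen.Rel.mul (ConGen.Rel.refl _) ih
      have h2 := aux_base x t w.length
      have := ConGen.Rel.trans h1 h2
      simp [FreeMonoid.length, add_assoc] at this ⊢
      exact this

/-- In `A = ⟨x ∈ X | x + y = y + y⟩` with `X` finite: if `a, b ∈ A` (represented by
words `w, v`) have equal length and `λ_a(x) = λ_b(x)` for some `x`, then `λ_a = λ_b`;
in particular `λ_a λ_b⁻¹` is the identity or fixed-point free on `X`. -/
theorem statement3 {X : Type*} [Fintype X] (r : X × X → X × X) (hYB : YB r)
    (hnd : ∀ x : X, Function.Bijective (lam r x)) (hidem : r ∘ r = r)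
    (L : FreeMonoid X → Equiv.Perm X)
    (hLof : ∀ x y : X, L (FreeMonoid.of x) y = lam r x y)
    (hLcon : ∀ w v : FreeMonoid X, conGen (simpleRel X) w v → L w = L v)
    (hcoc : ∀ (w : FreeMonoid X) (x : X),
      L (w * FreeMonoid.of (L w x)) = L w * L (FreeMonoid.of x)) :
    (∀ w v : FreeMonoid X, w.length = v.length →
      (∃ x : X, L w x = L v x) → L w = L v) ∧
    (∀ w v : FreeMonoid X, w.length = v.length →
      L w = L v ∨ ∀ x : X, L w ((L v)⁻¹ x) ≠ x) := by
  have part1 : ∀ w v : FreeMonoid X, w.length = v.length →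
      (∃ x : X, L w x = L v x) → L w = L v := by
    intro w v hlen ⟨z, hz⟩
    set t := L w z with ht
    have hw : L (w * FreeMonoid.of t) = L (FreeMonoid.of t ^ (w.length + 1)) :=
      hLcon _ _ (aux_main w t)
    have hv : L (v * FreeMonoid.of t) = L (FreeMonoid.of t ^ (v.length + 1)) :=
      hLcon _ _ (aux_main v t)
    have key : L (w * FreeMonoid.of t) = L (v * FreeMonoid.of t) := by
      rw [hw, hv, hlen]
    have h1 := hcoc w z
    have h2 := hcoc v z
    rw [← hz] at h2
    have : L w * L (FreeMonoid.of z) = L v * L (FreeMonoid.of z) := by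
      rw [← h1, ← h2, key]
    exact mul_right_cancel this
  refine ⟨part1, fun w v hlen => ?_⟩
  by_cases h : ∀ x : X, L w ((L v)⁻¹ x) ≠ x
  · exact Or.inr h
  · push_neg at h
    obtain ⟨x, hx⟩ := h
    exact Or.inl (part1 w v hlen ⟨(L v)⁻¹ x, by rw [hx]; exact (Equiv.apply_symm_apply _ _).symm⟩)
end

section
/- Let (X,r) be a left non-degenerate idempotent solution with structure semigroup S = S(X,r), realized inside A ⋊ Im(λ) as elements (a, λ_a). For u ∈ Λ = Im(q), set S_u = {(a,λ_a) ∈ S : λ_a^{-1}(a) = |a|u}. Then each S_u is a cancellative subsemigroup of S, S is the disjoint union of the S_u for u ∈ Λ, and S_u ∘ S_v ⊆ S_v for all u,v ∈ Λ. -/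
open Function

variable {X : Type*}

/-! ### Auxiliary lemmas -/

/-- The defining relation of `DerMon`. -/
lemma dof_mul_eq (x y : X) : dof x * dof y = dof y * dof y := by
  show (conGen (simpleRel X)).mk' _ * (conGen (simpleRel X)).mk' _ =
    (conGen (simpleRel X)).mk' _ * (conGen (simpleRel X)).mk' _
  rw [← map_mul, ← map_mul]
  exact Con.eq _ |>.mpr (ConGen.Rel.of _ _ ⟨x, y, rfl, rfl⟩)

lemma dof_cons_pow (x y : X) : ∀ j : ℕ, dof x * dof y ^ (j + 1) = dof y ^ (j + 2)
  | 0 => by rw [pow_one, dof_mul_eq, ← pow_two]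
  | (j + 1) => by
      rw [pow_succ' (dof y) (j + 1), ← mul_assoc, dof_mul_eq x y, mul_assoc,
        dof_cons_pow y y j, ← pow_succ']

lemma dof_pow_mul_pow (x y : X) :
    ∀ k j : ℕ, dof x ^ (k + 1) * dof y ^ (j + 1) = dof y ^ (k + 1 + (j + 1))
  | 0, j => by
      have h : 0 + 1 + (j + 1) = j + 2 := by omega
      rw [h, pow_one, dof_cons_pow]
  | (k + 1), j => by
      have h1 : k + 1 + (j + 1) = k + j + 1 + 1 := by omega
      have h2 : k + 1 + 1 + (j + 1) = k + j + 1 + 2 := by omega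
      rw [pow_succ' (dof x) (k + 1), mul_assoc, dof_pow_mul_pow x y k j, h1, h2,
        dof_cons_pow x y (k + j + 1)]

/-- "last letter" detector: `x` acts on `Option X` by `o ↦ some (o.getD x)`. -/
def lastFun (x : X) : Function.End (Option X) := fun o => some (o.getD x)

/-- The last-letter monoid hom on `DerMon`. -/
def lastHom (X : Type*) : DerMon X →* Function.End (Option X) :=
  Con.lift _ (FreeMonoid.lift lastFun) (by
    apply Con.conGen_le.mpr
    rintro a b ⟨x, y, rfl, rfl⟩
    rw [Con.ker_rel, map_mul, map_mul]
    simp only [FreeMonoid.lift_eval_of]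
    funext o
    rfl)

lemma lastHom_dof (x : X) : lastHom X (dof x) = lastFun x := rfl

lemma lastFun_pow_some (x z : X) : ∀ k : ℕ, (lastFun x ^ k) (some z) = some z
  | 0 => rfl
  | (k + 1) => by
      rw [pow_succ]
      show (lastFun x ^ k) (lastFun x (some z)) = some z
      exact lastFun_pow_some x z k

lemma lastHom_dof_pow (x : X) (k : ℕ) : lastHom X (dof x ^ (k + 1)) none = some x := by
  rw [map_pow, lastHom_dof, pow_succ]
  show (lastFun x ^ k) (lastFun x none) = some x
  exact lastFun_pow_some x x k

lemma dof_pow_ne_one (x : X) (k : ℕ) : dof x ^ (k + 1) ≠ (1 : DerMon X) := by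
  intro h
  have h1 : lastHom X (dof x ^ (k + 1)) none = lastHom X 1 none := by rw [h]
  rw [lastHom_dof_pow, map_one] at h1
  exact Option.some_ne_none x h1

lemma dof_pow_inj_last {x y : X} {k m : ℕ}
    (h : dof x ^ (k + 1) = dof y ^ (m + 1)) : x = y := by
  have h1 : lastHom X (dof x ^ (k + 1)) none = lastHom X (dof y ^ (m + 1)) none := by rw [h]
  rw [lastHom_dof_pow, lastHom_dof_pow] at h1
  exact Option.some_injective _ h1

/-- Normal form: every element of `DerMon X` is `1` or `dof x ^ (k+1)`. -/
lemma derMon_normal_form (a : DerMon X) : a = 1 ∨ ∃ x k, a = dof x ^ (k + 1) := by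
  induction a using Con.induction_on with
  | H w =>
    induction w using FreeMonoid.recOn with
    | one => exact Or.inl (map_one (conGen (simpleRel X)).mk')
    | of_mul x xs ih =>
      have hx : ((FreeMonoid.of x * xs : FreeMonoid X) : DerMon X) =
          dof x * (xs : DerMon X) := Con.coe_mul _ _
      rcases ih with h1 | ⟨y, k, hk⟩
      · refine Or.inr ⟨x, 0, ?_⟩
        rw [hx, h1, mul_one, pow_one]
      · refine Or.inr ⟨y, k + 1, ?_⟩
        rw [hx, hk, dof_cons_pow]

/-- Decomposition of the structure semigroup `S(X,r)` (realised inside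
`A(X,r) ⋊ Im λ` as elements `(a, λ_a)`, here encoded by their `A`-component)
into the components `S_u`, `u ∈ Λ = Im q`: each `S_u` is a cancellative
subsemigroup, `S` is the disjoint union of the `S_u`, and `S_u ∘ S_v ⊆ S_v`. -/
theorem statement4
    {X : Type*} [Fintype X] (r : X × X → X × X) (hYB : YB r) (hidem : r ∘ r = r)
    (L : DerMon X → Equiv.Perm X)
    (hLx : ∀ x y : X, L (dof x) y = lam r x y)
    (hL1 : L 1 = 1)
    (act : Equiv.Perm X → DerMon X →* DerMon X)
    (hact : ∀ (f : Equiv.Perm X) (x : X), act f (dof x) = dof (f x))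
    (hact1 : ∀ a : DerMon X, act 1 a = a)
    (hactmul : ∀ (f g : Equiv.Perm X) (a : DerMon X), act (f * g) a = act f (act g a))
    (len : DerMon X → ℕ)
    (hlenmul : ∀ a b : DerMon X, len (a * b) = len a + len b)
    (hlenof : ∀ x : X, len (dof x) = 1)
    (hcoc : ∀ a b : DerMon X, L (a * act (L a) b) = L a * L b)
    :
    (∀ u ∈ Set.range (qmap L), ∀ a ∈ Su L act len u, ∀ b ∈ Su L act len u,
      sop L act a b ∈ Su L act len u) ∧
    (∀ u ∈ Set.range (qmap L), ∀ a ∈ Su L act len u, ∀ b ∈ Su L act len u,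
      ∀ c ∈ Su L act len u,
        (sop L act a c = sop L act b c → a = b) ∧
        (sop L act c a = sop L act c b → a = b)) ∧
    (∀ a : DerMon X, a ≠ 1 → ∃! u : X, u ∈ Set.range (qmap L) ∧ a ∈ Su L act len u) ∧
    (∀ u ∈ Set.range (qmap L), ∀ v ∈ Set.range (qmap L),
      ∀ a ∈ Su L act len u, ∀ b ∈ Su L act len v, sop L act a b ∈ Su L act len v) := by
  -- basic length facts
  have hlenpow : ∀ (x : X) (k : ℕ), len (dof x ^ (k + 1)) = k + 1 := by
    intro x k
    induction k with
    | zero => rw [pow_one, hlenof]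
    | succ k ih => rw [pow_succ, hlenmul, ih, hlenof]
  -- injectivity of the normal form
  have hinj : ∀ {x y : X} {k m : ℕ}, dof x ^ (k + 1) = dof y ^ (m + 1) → x = y ∧ k = m := by
    intro x y k m h
    refine ⟨dof_pow_inj_last h, ?_⟩
    have := congrArg len h
    rw [hlenpow, hlenpow] at this
    omega
  -- action on powers
  have hactpow : ∀ (f : Equiv.Perm X) (x : X) (k : ℕ),
      act f (dof x ^ k) = dof (f x) ^ k := by
    intro f x k
    rw [map_pow, hact]
  -- membership in `Su` in terms of the normal form
  have hmem : ∀ (u x : X) (k : ℕ),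
      dof x ^ (k + 1) ∈ Su L act len u ↔ (L (dof x ^ (k + 1)))⁻¹ x = u := by
    intro u x k
    constructor
    · rintro ⟨-, h2⟩
      rw [hlenpow, hactpow] at h2
      exact (hinj h2).1
    · intro h
      refine ⟨dof_pow_ne_one x k, ?_⟩
      rw [hlenpow, hactpow, h]
  -- computation of the semigroup product in normal form
  have hsop : ∀ (x y : X) (k m : ℕ),
      sop L act (dof x ^ (k + 1)) (dof y ^ (m + 1)) =
        dof (L (dof x ^ (k + 1)) y) ^ (k + 1 + (m + 1)) := by
    intro x y k m
    rw [sop, hactpow, dof_pow_mul_pow]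
  -- the diagonal is in the range of `qmap`
  have hrange : ∀ (k : ℕ) (x : X), (L (dof x ^ (k + 1)))⁻¹ x ∈ Set.range (qmap L) := by
    intro k
    induction k with
    | zero =>
      intro x
      exact ⟨x, by rw [pow_one]; rfl⟩
    | succ k ih =>
      intro x
      have hq : L (dof x) (qmap L x) = x := Equiv.apply_symm_apply _ _
      have key : dof x ^ (k + 1 + 1) =
          dof x * act (L (dof x)) (dof (qmap L x) ^ (k + 1)) := by
        rw [hactpow, hq, dof_cons_pow]
      have hc : L (dof x ^ (k + 1 + 1)) = L (dof x) * L (dof (qmap L x) ^ (k + 1)) := by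
        rw [key, hcoc]
      have : (L (dof x ^ (k + 1 + 1)))⁻¹ x =
          (L (dof (qmap L x) ^ (k + 1)))⁻¹ (qmap L x) := by
        rw [hc, mul_inv_rev, Equiv.Perm.mul_apply]
        rfl
      rw [this]
      exact ih (qmap L x)
  -- claim 4 : S_u ∘ S_v ⊆ S_v
  have main4 : ∀ u ∈ Set.range (qmap L), ∀ v ∈ Set.range (qmap L),
      ∀ a ∈ Su L act len u, ∀ b ∈ Su L act len v, sop L act a b ∈ Su L act len v := by
    intro u _ v _ a ha b hb
    obtain ⟨x, k, rfl⟩ := (derMon_normal_form a).resolve_left ha.1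
    obtain ⟨y, m, rfl⟩ := (derMon_normal_form b).resolve_left hb.1
    have hv : (L (dof y ^ (m + 1)))⁻¹ y = v := (hmem v y m).mp hb
    rw [hsop]
    have hcc : L (sop L act (dof x ^ (k + 1)) (dof y ^ (m + 1))) =
        L (dof x ^ (k + 1)) * L (dof y ^ (m + 1)) := hcoc _ _
    rw [hsop] at hcc
    have h2 : k + 1 + (m + 1) = (k + m + 1) + 1 := by omega
    rw [h2] at hcc ⊢
    rw [hmem, hcc, mul_inv_rev, Equiv.Perm.mul_apply]
    simpa [Equiv.Perm.coe_inv] using hv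
  refine ⟨fun u hu a ha b hb => main4 u hu u hu a ha b hb, ?_, ?_, main4⟩
  · -- cancellativity
    intro u hu a ha b hb c hc
    obtain ⟨x, k, rfl⟩ := (derMon_normal_form a).resolve_left ha.1
    obtain ⟨x', k', rfl⟩ := (derMon_normal_form b).resolve_left hb.1
    obtain ⟨y, m, rfl⟩ := (derMon_normal_form c).resolve_left hc.1
    have hxu : (L (dof x ^ (k + 1)))⁻¹ x = u := (hmem u x k).mp ha
    have hx'u : (L (dof x' ^ (k' + 1)))⁻¹ x' = u := (hmem u x' k').mp hb
    constructor
    · -- right cancellation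
      intro h
      have hLL : L (dof x ^ (k + 1)) = L (dof x' ^ (k' + 1)) := by
        have := congrArg L h
        rw [sop, sop, hcoc, hcoc] at this
        exact mul_right_cancel this
      have hlen : k = k' := by
        have := congrArg len h
        rw [hsop, hsop] at this
        have h2 : k + 1 + (m + 1) = (k + m + 1) + 1 := by omega
        have h2' : k' + 1 + (m + 1) = (k' + m + 1) + 1 := by omega
        rw [h2, h2', hlenpow, hlenpow] at this
        omega
      have hx : x = x' := by
        have e1 : x = L (dof x ^ (k + 1)) u := by rw [← hxu, Equiv.Perm.coe_inv, Equiv.apply_symm_apply]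
        have e2 : x' = L (dof x' ^ (k' + 1)) u := by rw [← hx'u, Equiv.Perm.coe_inv, Equiv.apply_symm_apply]
        rw [e1, e2, hLL]
      rw [hx, hlen]
    · -- left cancellation
      intro h
      rw [hsop, hsop] at h
      have h2 : m + 1 + (k + 1) = (m + k + 1) + 1 := by omega
      have h2' : m + 1 + (k' + 1) = (m + k' + 1) + 1 := by omega
      rw [h2, h2'] at h
      obtain ⟨he, hn⟩ := hinj h
      have hk : k = k' := by omega
      have hx : x = x' := (L (dof y ^ (m + 1))).injective he
      rw [hx, hk]
  · -- decomposition
    intro a ha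
    obtain ⟨x, k, rfl⟩ := (derMon_normal_form a).resolve_left ha
    refine ⟨(L (dof x ^ (k + 1)))⁻¹ x, ⟨hrange k x, (hmem _ x k).mpr rfl⟩, ?_⟩
    rintro u' ⟨-, hu'⟩
    exact ((hmem u' x k).mp hu').symm
end

section
/- Let (X,r) be a finite left non-degenerate idempotent solution. Then for every x ∈ X and every positive integer n, the element λ_{nx}^{-1}(x) lies in Λ = Im(q). -/
open Function

variable {X : Type*}

/-- For every `x ∈ X` and every positive integer `n`, `λ_{nx}⁻¹(x) ∈ Λ = Im q`. -/
theorem statement5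
    {X : Type*} [Fintype X] (r : X × X → X × X) (hYB : YB r) (hidem : r ∘ r = r)
    (L : DerMon X → Equiv.Perm X)
    (hLx : ∀ x y : X, L (dof x) y = lam r x y)
    (hL1 : L 1 = 1)
    (act : Equiv.Perm X → DerMon X →* DerMon X)
    (hact : ∀ (f : Equiv.Perm X) (x : X), act f (dof x) = dof (f x))
    (hact1 : ∀ a : DerMon X, act 1 a = a)
    (hactmul : ∀ (f g : Equiv.Perm X) (a : DerMon X), act (f * g) a = act f (act g a))
    (len : DerMon X → ℕ)
    (hlenmul : ∀ a b : DerMon X, len (a * b) = len a + len b)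
    (hlenof : ∀ x : X, len (dof x) = 1)
    (hcoc : ∀ a b : DerMon X, L (a * act (L a) b) = L a * L b)
    :
    ∀ (x : X) (n : ℕ), 0 < n → (L (dof x ^ n))⁻¹ x ∈ Set.range (qmap L) := by
  intro x n hn
  suffices h : ∀ m : ℕ, (L (dof x ^ (m + 1)))⁻¹ x = (qmap L)^[m + 1] x by
    obtain ⟨m, rfl⟩ := Nat.exists_eq_succ_of_ne_zero hn.ne'
    rw [h m, Function.iterate_succ_apply']
    exact ⟨_, rfl⟩
  intro m
  induction m with
  | zero => simp [qmap]
  | succ m ih =>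
    have key : dof x ^ (m + 2) =
        dof x ^ (m + 1) * act (L (dof x ^ (m + 1))) (dof ((L (dof x ^ (m + 1)))⁻¹ x)) := by
      rw [hact, Equiv.Perm.coe_inv, Equiv.apply_symm_apply, pow_succ]
    have hL : L (dof x ^ (m + 2)) =
        L (dof x ^ (m + 1)) * L (dof ((L (dof x ^ (m + 1)))⁻¹ x)) := by
      rw [key]; exact hcoc _ _
    rw [hL, mul_inv_rev, Equiv.Perm.mul_apply, ih]
    simp [Function.iterate_succ_apply', qmap]
end

section
/- Let (X,r) be a finite left non-degenerate idempotent solution. Each cancellative semigroup S_u has a group of quotients G_u = S_u ∘ ⟨c_u⟩^{-1} which is an FC-group possessing a central infinite cyclic subgroup of finite index; consequently its torsion elements form a finite subgroup T(G_u), and G_u/T(G_u) ≅ ℤ. -/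
open Function

variable {X : Type*}

/-- `φ : S(X,r) → G` realises `G` as the group of quotients `S_u ∘ ⟨c_u⟩⁻¹` of the
cancellative semigroup `S_u`. -/
def IsQuotGroup {X : Type*} {G : Type*} [Group G]
    (op : DerMon X → DerMon X → DerMon X) (S : Set (DerMon X)) (cu : DerMon X)
    (φ : DerMon X → G) : Prop :=
  (∀ a ∈ S, ∀ b ∈ S, φ (op a b) = φ a * φ b) ∧
  (∀ a ∈ S, ∀ b ∈ S, φ a = φ b → a = b) ∧
  (∀ g : G, ∃ a ∈ S, ∃ n : ℕ, g = φ a * (φ cu)⁻¹ ^ n)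

/-! ### Auxiliary lemmas -/

lemma dof_mul_dof (x y : X) : dof x * dof y = (dof y : DerMon X) ^ 2 := by
  have h : (conGen (simpleRel X)).mk' (FreeMonoid.of x * FreeMonoid.of y)
      = (conGen (simpleRel X)).mk' (FreeMonoid.of y * FreeMonoid.of y) :=
    (Con.eq _).2 (ConGen.Rel.of _ _ ⟨x, y, rfl, rfl⟩)
  rw [map_mul, map_mul] at h
  rw [sq]
  exact h

lemma dof_pow_mul_dof (z w : X) (n : ℕ) (hn : 1 ≤ n) :
    (dof z : DerMon X) ^ n * dof w = dof w ^ (n + 1) := by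
  induction n with
  | zero => omega
  | succ n ih =>
    rcases Nat.eq_or_lt_of_le hn with h | h
    · rw [← h]
      simpa [pow_one] using dof_mul_dof z w
    · have hn' : 1 ≤ n := by omega
      calc (dof z : DerMon X) ^ (n + 1) * dof w
          = dof z ^ n * (dof z * dof w) := by rw [pow_succ, mul_assoc]
        _ = dof z ^ n * dof w * dof w := by rw [dof_mul_dof, sq, ← mul_assoc]
        _ = dof w ^ (n + 1) * dof w := by rw [ih hn']
        _ = dof w ^ (n + 1 + 1) := (pow_succ _ _).symm

lemma dof_pow_mul_dof_pow (z w : X) (n m : ℕ) (hn : 1 ≤ n) (hm : 1 ≤ m) :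
    (dof z : DerMon X) ^ n * dof w ^ m = dof w ^ (n + m) := by
  induction m with
  | zero => omega
  | succ m ih =>
    rcases Nat.eq_or_lt_of_le hm with h | h
    · rw [← h, pow_one, dof_pow_mul_dof z w n hn]
    · have hm' : 1 ≤ m := by omega
      calc (dof z : DerMon X) ^ n * dof w ^ (m + 1)
          = (dof z ^ n * dof w ^ m) * dof w := by rw [pow_succ, mul_assoc]
      _ = dof w ^ (n + m) * dof w := by rw [ih hm']
      _ = dof w ^ (n + (m + 1)) := by rw [← pow_succ, ← add_assoc]

/-- Each cancellative component `S_u` has a group of quotients `G_u = S_u ∘ ⟨c_u⟩⁻¹`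
which is an FC-group with a central infinite cyclic subgroup of finite index; its
torsion elements form a finite subgroup `T(G_u)` and `G_u/T(G_u) ≅ ℤ`. -/
theorem statement8
    {X : Type*} [Fintype X] (r : X × X → X × X) (hYB : YB r) (hidem : r ∘ r = r)
    (L : DerMon X → Equiv.Perm X)
    (hLx : ∀ x y : X, L (dof x) y = lam r x y)
    (hL1 : L 1 = 1)
    (act : Equiv.Perm X → DerMon X →* DerMon X)
    (hact : ∀ (f : Equiv.Perm X) (x : X), act f (dof x) = dof (f x))
    (hact1 : ∀ a : DerMon X, act 1 a = a)
    (hactmul : ∀ (f g : Equiv.Perm X) (a : DerMon X), act (f * g) a = act f (act g a))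
    (len : DerMon X → ℕ)
    (hlenmul : ∀ a b : DerMon X, len (a * b) = len a + len b)
    (hlenof : ∀ x : X, len (dof x) = 1)
    (hcoc : ∀ a b : DerMon X, L (a * act (L a) b) = L a * L b)
    (d : ℕ) (hd : 0 < d) (hdexp : ∀ a : DerMon X, L a ^ d = 1)
    :
    ∀ u ∈ Set.range (qmap L),
      ∃ (G : Type) (_ : Group G) (φ : DerMon X → G),
        IsQuotGroup (sop L act) (Su L act len u) ((dof u : DerMon X) ^ d) φ ∧
        (∀ g : G, {h : G | ∃ k : G, k * g * k⁻¹ = h}.Finite) ∧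
        (∃ c : G, c ∈ Subgroup.center G ∧ (∀ n : ℤ, n ≠ 0 → c ^ n ≠ 1) ∧
          (Subgroup.zpowers c).FiniteIndex) ∧
        {g : G | IsOfFinOrder g}.Finite ∧
        (∃ ψ : G →* Multiplicative ℤ, Function.Surjective ψ ∧
          ∀ g : G, ψ g = 1 ↔ IsOfFinOrder g) := by
  classical
  intro u hu
  obtain ⟨x0, hx0⟩ := hu
  have len_one : len (1 : DerMon X) = 0 := by
    have h := hlenmul 1 1
    rw [one_mul] at h
    omega
  have len_pow : ∀ (a : DerMon X) (n : ℕ), len (a ^ n) = n * len a := by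
    intro a n
    induction n with
    | zero => simpa [pow_zero] using len_one
    | succ n ih => rw [pow_succ, hlenmul, ih]; ring
  have len_dof_pow : ∀ (z : X) (n : ℕ), len ((dof z : DerMon X) ^ n) = n := by
    intro z n; rw [len_pow, hlenof, mul_one]
  have ne_one : ∀ a : DerMon X, 1 ≤ len a → a ≠ 1 := by
    intro a h ha
    rw [ha, len_one] at h
    omega
  have act_dof_pow : ∀ (f : Equiv.Perm X) (z : X) (n : ℕ),
      act f ((dof z : DerMon X) ^ n) = dof (f z) ^ n := by
    intro f z n; rw [map_pow, hact]
  set S : Set (DerMon X) := Su L act len u with hSdef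
  set c : DerMon X := dof u ^ d with hcdef
  have su_spec : ∀ a ∈ S, a = dof (L a u) ^ len a ∧ 1 ≤ len a := by
    intro a ha
    obtain ⟨ha1, ha2⟩ := ha
    have h0 : act (L a) (act (L a)⁻¹ a) = a := by
      rw [← hactmul, mul_inv_cancel, hact1]
    have h1 : act (L a) ((dof u : DerMon X) ^ len a) = dof ((L a) u) ^ len a :=
      act_dof_pow _ _ _
    have hform : a = dof (L a u) ^ len a := by
      rw [← h1, ← ha2, h0]
    refine ⟨hform, ?_⟩
    by_contra h
    have h0' : len a = 0 := by omega
    exact ha1 (by rw [hform, h0', pow_zero])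
  have su_mk : ∀ (f : Equiv.Perm X) (n : ℕ), 1 ≤ n →
      L ((dof (f u) : DerMon X) ^ n) = f → (dof (f u) : DerMon X) ^ n ∈ S := by
    intro f n hn hLf
    refine ⟨ne_one _ (by rw [len_dof_pow]; exact hn), ?_⟩
    rw [hLf, act_dof_pow, Equiv.Perm.inv_def, Equiv.symm_apply_apply, len_dof_pow]
  have sop_mem : ∀ a ∈ S, ∀ b ∈ S, sop L act a b ∈ S ∧
      L (sop L act a b) = L a * L b ∧ len (sop L act a b) = len a + len b := by
    intro a ha b hb
    obtain ⟨haf, han⟩ := su_spec a ha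
    obtain ⟨hbf, hbn⟩ := su_spec b hb
    have hL : L (sop L act a b) = L a * L b := hcoc a b
    have h1 : act (L a) b = dof ((L a) ((L b) u)) ^ len b := by
      conv_lhs => rw [hbf]
      rw [act_dof_pow]
    have hform : sop L act a b = dof ((L a * L b) u) ^ (len a + len b) := by
      calc sop L act a b = a * act (L a) b := rfl
        _ = dof (L a u) ^ len a * act (L a) b := congrArg (· * act (L a) b) haf
        _ = dof (L a u) ^ len a * dof ((L a) ((L b) u)) ^ len b := by rw [h1]
        _ = dof ((L a) ((L b) u)) ^ (len a + len b) :=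
            dof_pow_mul_dof_pow _ _ _ _ han hbn
        _ = dof ((L a * L b) u) ^ (len a + len b) := by rw [Equiv.Perm.mul_apply]
    refine ⟨?_, hL, ?_⟩
    · rw [hform]
      exact su_mk _ _ (by omega) (by rw [← hform, hL])
    · rw [hform, len_dof_pow]
  have spow : ∀ a ∈ S, ∀ k : ℕ, 1 ≤ k →
      ∃ b ∈ S, L b = (L a) ^ k ∧ len b = k * len a := by
    intro a ha k hk
    induction k with
    | zero => omega
    | succ k ih =>
      rcases Nat.eq_or_lt_of_le hk with h | h
      · exact ⟨a, ha, by rw [← h, pow_one], by rw [← h, one_mul]⟩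
      · obtain ⟨b, hb, hLb, hlb⟩ := ih (by omega)
        obtain ⟨hm, hL2, hlen2⟩ := sop_mem b hb a ha
        exact ⟨sop L act b a, hm, by rw [hL2, hLb, ← pow_succ],
          by rw [hlen2, hlb]; ring⟩
  have hx0' : L (dof x0) u = x0 := by
    have h : (L (dof x0))⁻¹ x0 = u := hx0
    rw [← h, Equiv.Perm.inv_def, Equiv.apply_symm_apply]
  have hs0 : (dof x0 : DerMon X) ∈ S := by
    have h := su_mk (L (dof x0)) 1 le_rfl (by rw [hx0', pow_one])
    rw [hx0', pow_one] at h
    exact h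
  have hcS : c ∈ S ∧ L c = 1 ∧ len c = d := by
    obtain ⟨b, hb, hLb, hlb⟩ := spow (dof x0) hs0 d hd
    have hLb1 : L b = 1 := by rw [hLb, hdexp]
    have hlb1 : len b = d := by rw [hlb, hlenof, mul_one]
    have hbform := (su_spec b hb).1
    have hbc : b = c := by
      rw [hbform, hLb1, hlb1, hcdef, Equiv.Perm.one_apply]
    rw [← hbc]
    exact ⟨hb, hLb1, hlb1⟩
  obtain ⟨hcmem, hLc, hlenc⟩ := hcS
  -- ambient concrete group in `Type 0`
  set e : X ≃ Fin (Fintype.card X) := Fintype.equivFin X with hedef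
  set ι : Equiv.Perm X → Equiv.Perm (Fin (Fintype.card X)) := fun f => e.permCongr f
    with hιdef
  have ιmul : ∀ f g : Equiv.Perm X, ι (f * g) = ι f * ι g := by
    intro f g
    ext i
    simp [hιdef, Equiv.Perm.mul_apply]
  have ιinj : Function.Injective ι := fun f g h => e.permCongr.injective h
  have ι1 : ι 1 = 1 := by
    ext i
    simp [hιdef]
  set φH : DerMon X → Equiv.Perm (Fin (Fintype.card X)) × Multiplicative ℤ :=
    fun a => (ι (L a), Multiplicative.ofAdd (len a : ℤ)) with hφdef
  have fst_pow : ∀ (p : Equiv.Perm (Fin (Fintype.card X)) × Multiplicative ℤ) (n : ℕ),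
      (p ^ n).1 = p.1 ^ n := fun p n => map_pow (MonoidHom.fst _ _) p n
  have snd_pow : ∀ (p : Equiv.Perm (Fin (Fintype.card X)) × Multiplicative ℤ) (n : ℕ),
      (p ^ n).2 = p.2 ^ n := fun p n => map_pow (MonoidHom.snd _ _) p n
  have fst_zpow : ∀ (p : Equiv.Perm (Fin (Fintype.card X)) × Multiplicative ℤ) (n : ℤ),
      (p ^ n).1 = p.1 ^ n := fun p n => map_zpow (MonoidHom.fst _ _) p n
  have snd_zpow : ∀ (p : Equiv.Perm (Fin (Fintype.card X)) × Multiplicative ℤ) (n : ℤ),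
      (p ^ n).2 = p.2 ^ n := fun p n => map_zpow (MonoidHom.snd _ _) p n
  have φc : φH c = (1, Multiplicative.ofAdd (d : ℤ)) := by
    simp only [hφdef, hLc, hlenc, ι1]
  have φsop : ∀ a ∈ S, ∀ b ∈ S, φH (sop L act a b) = φH a * φH b := by
    intro a ha b hb
    obtain ⟨_, hL2, hlen2⟩ := sop_mem a ha b hb
    simp only [hφdef, hL2, hlen2, ιmul]
    rw [Prod.mk_mul_mk, Prod.mk.injEq]
    refine ⟨rfl, ?_⟩
    rw [← ofAdd_add]
    congr 1
  have central : ∀ h : Equiv.Perm (Fin (Fintype.card X)) × Multiplicative ℤ,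
      φH c * h = h * φH c := by
    intro h
    rw [φc]
    ext
    · simp
    · simp [mul_comm]
  have hccomm : ∀ (h : Equiv.Perm (Fin (Fintype.card X)) × Multiplicative ℤ) (t : ℤ),
      (φH c) ^ t * h = h * (φH c) ^ t := fun h t => (Commute.zpow_left (central h) t)
  have invpow : ∀ n : ℕ, ((φH c)⁻¹) ^ n = (φH c) ^ (-(n : ℤ)) := by
    intro n
    rw [inv_pow, ← zpow_natCast, ← zpow_neg]
  have move : ∀ (h1 h2 : Equiv.Perm (Fin (Fintype.card X)) × Multiplicative ℤ) (t s : ℤ),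
      (h1 * (φH c) ^ t) * (h2 * (φH c) ^ s) = (h1 * h2) * (φH c) ^ (t + s) := by
    intro h1 h2 t s
    rw [mul_assoc, ← mul_assoc ((φH c) ^ t), hccomm h2 t, mul_assoc h2, ← zpow_add,
      ← mul_assoc]
  set Qset : Set (Equiv.Perm (Fin (Fintype.card X)) × Multiplicative ℤ) :=
    {h | ∃ a ∈ S, ∃ n : ℕ, h = φH a * ((φH c)⁻¹) ^ n} with hQdef
  have absorb : ∀ a ∈ S, ∀ t : ℕ, ∃ b ∈ S, φH b = φH a * (φH c) ^ t := by
    intro a ha t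
    induction t with
    | zero => exact ⟨a, ha, by rw [pow_zero, mul_one]⟩
    | succ t ih =>
      obtain ⟨b, hb, hfb⟩ := ih
      obtain ⟨hm, _, _⟩ := sop_mem b hb c hcmem
      exact ⟨sop L act b c, hm, by rw [φsop b hb c hcmem, hfb, pow_succ, mul_assoc]⟩
  have memQ : ∀ a ∈ S, ∀ t : ℤ, (φH a * (φH c) ^ t) ∈ Qset := by
    intro a ha t
    cases t with
    | ofNat n =>
      obtain ⟨b, hb, hfb⟩ := absorb a ha n
      refine ⟨b, hb, 0, ?_⟩
      rw [pow_zero, mul_one, hfb]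
      norm_num
    | negSucc n =>
      exact ⟨a, ha, n + 1, by rw [zpow_negSucc, inv_pow]⟩
  have memS_Q : ∀ a ∈ S, φH a ∈ Qset :=
    fun a ha => ⟨a, ha, 0, by rw [pow_zero, mul_one]⟩
  have inv_φ : ∀ a ∈ S, ∃ b ∈ S, (φH a)⁻¹ = φH b * (φH c) ^ (-(2 * len a : ℤ)) := by
    intro a ha
    obtain ⟨b, hb, hLb, hlb⟩ := spow a ha (2 * d - 1) (by omega)
    have h1 : L a * L b = 1 := by
      rw [hLb, ← pow_succ']
      have h2d : 2 * d - 1 + 1 = d * 2 := by omega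
      rw [h2d, pow_mul, hdexp, one_pow]
    obtain ⟨hm, hL2, hlen2⟩ := sop_mem a ha b hb
    have hlen3 : len (sop L act a b) = 2 * d * len a := by
      rw [hlen2, hlb]
      have hd1 : (2 * d - 1) + 1 = 2 * d := by omega
      have hr : len a + (2 * d - 1) * len a = ((2 * d - 1) + 1) * len a := by ring
      rw [hr, hd1]
    have h2 : φH a * φH b = (φH c) ^ (2 * len a : ℕ) := by
      rw [← φsop a ha b hb, φc]
      have hpair : ((1 : Equiv.Perm (Fin (Fintype.card X))),
          Multiplicative.ofAdd (d : ℤ)) ^ (2 * len a : ℕ)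
          = (1, Multiplicative.ofAdd (d : ℤ) ^ (2 * len a : ℕ)) := by
        apply Prod.ext
        · rw [fst_pow, one_pow]
        · rw [snd_pow]
      rw [hpair]
      simp only [hφdef, hL2, hlen3, h1, ι1]
      congr 1
      rw [← ofAdd_nsmul]
      congr 1
      push_cast
      ring
    refine ⟨b, hb, ?_⟩
    have key : φH a * (φH b * (φH c) ^ (-(2 * len a : ℤ))) = 1 := by
      rw [← mul_assoc, h2, ← zpow_natCast ((φH c)) (2 * len a), ← zpow_add]
      norm_num
    rw [← inv_eq_of_mul_eq_one_right key]
  -- the subgroup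
  set Q : Subgroup (Equiv.Perm (Fin (Fintype.card X)) × Multiplicative ℤ) :=
    { carrier := Qset
      one_mem' := ⟨c, hcmem, 1, by rw [pow_one, mul_inv_cancel]⟩
      mul_mem' := by
        rintro h1 h2 ⟨a, ha, n, rfl⟩ ⟨b, hb, m, rfl⟩
        rw [invpow, invpow, move]
        rw [← φsop a ha b hb]
        exact memQ _ (sop_mem a ha b hb).1 _
      inv_mem' := by
        rintro h ⟨a, ha, n, rfl⟩
        obtain ⟨b, hb, hinv⟩ := inv_φ a ha
        show (φH a * ((φH c)⁻¹) ^ n)⁻¹ ∈ Qset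
        rw [invpow, mul_inv_rev, ← zpow_neg, neg_neg, hinv]
        rw [← mul_assoc, hccomm (φH b) (n : ℤ), mul_assoc, ← zpow_add]
        exact memQ b hb _ } with hQgrp
  have memQ_iff : ∀ h, h ∈ Q ↔ h ∈ Qset := fun h => Iff.rfl
  set φ' : DerMon X → ↥Q := fun a =>
    if h : φH a ∈ Qset then (⟨φH a, h⟩ : ↥Q) else 1 with hφ'def
  have φ'val : ∀ a ∈ S,
      (φ' a : Equiv.Perm (Fin (Fintype.card X)) × Multiplicative ℤ) = φH a := by
    intro a ha
    simp only [hφ'def, dif_pos (memS_Q a ha)]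
  have snd_eq_one_of_fin : ∀ g : ↥Q, IsOfFinOrder g → g.1.2 = 1 := by
    intro g hg
    obtain ⟨n, hn, hgn⟩ := isOfFinOrder_iff_pow_eq_one.1 hg
    have hv : (g.1) ^ n = 1 := by
      have h := congrArg Subtype.val hgn
      rwa [SubgroupClass.coe_pow, OneMemClass.coe_one] at h
    have h2 : (g.1.2) ^ n = 1 := by
      have h := congrArg Prod.snd hv
      rwa [snd_pow, Prod.snd_one] at h
    have h3 := congrArg Multiplicative.toAdd h2
    rw [toAdd_pow] at h3
    have h4 : (n : ℤ) * Multiplicative.toAdd (g.1.2) = 0 := by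
      rw [nsmul_eq_mul] at h3
      simpa using h3
    have h5 : Multiplicative.toAdd (g.1.2) = 0 := by
      rcases mul_eq_zero.1 h4 with h | h
      · exfalso
        have : (n : ℤ) ≠ 0 := by positivity
        exact this h
      · exact h
    have h6 := congrArg Multiplicative.ofAdd h5
    simpa using h6
  have prefin : ∀ w : Multiplicative ℤ,
      (Subtype.val ⁻¹' ((Set.univ : Set (Equiv.Perm (Fin (Fintype.card X)))) ×ˢ {w})
        : Set ↥Q).Finite :=
    fun w => Set.Finite.preimage (Subtype.val_injective.injOn)
      ((Set.finite_univ).prod (Set.finite_singleton w))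
  refine ⟨↥Q, inferInstance, φ', ⟨?_, ?_, ?_⟩, ?_, ?_, ?_, ?_⟩
  · -- homomorphism on S
    intro a ha b hb
    apply Subtype.ext
    push_cast
    rw [φ'val _ (sop_mem a ha b hb).1, φ'val a ha, φ'val b hb]
    exact φsop a ha b hb
  · -- injective on S
    intro a ha b hb h
    have hv : φH a = φH b := by
      rw [← φ'val a ha, ← φ'val b hb, h]
    have h1 : ι (L a) = ι (L b) := congrArg Prod.fst hv
    have h2 : Multiplicative.ofAdd ((len a : ℤ)) = Multiplicative.ofAdd ((len b : ℤ)) :=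
      congrArg Prod.snd hv
    have hL : L a = L b := ιinj h1
    have hlen : len a = len b := by
      have h3 := congrArg Multiplicative.toAdd h2
      simpa using h3
    rw [(su_spec a ha).1, (su_spec b hb).1, hL, hlen]
  · -- every element has the right form
    intro g
    obtain ⟨a, ha, n, hval⟩ := (memQ_iff _).1 g.2
    refine ⟨a, ha, n, ?_⟩
    apply Subtype.ext
    push_cast
    rw [φ'val a ha, φ'val c hcmem]
    exact hval
  · -- FC group
    intro g
    refine Set.Finite.subset (prefin g.1.2) ?_
    rintro h ⟨k, rfl⟩
    refine ⟨Set.mem_univ _, ?_⟩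
    show (k * g * k⁻¹ : ↥Q).1.2 ∈ ({g.1.2} : Set (Multiplicative ℤ))
    have hcoe : (k * g * k⁻¹ : ↥Q).1 = k.1 * g.1 * (k.1)⁻¹ := rfl
    rw [Set.mem_singleton_iff, hcoe, Prod.snd_mul, Prod.snd_mul, Prod.snd_inv]
    rw [mul_comm k.1.2 g.1.2, mul_assoc, mul_inv_cancel, mul_one]
  · -- central infinite cyclic of finite index
    refine ⟨⟨φH c, memS_Q c hcmem⟩, ?_, ?_, ?_⟩
    · rw [Subgroup.mem_center_iff]
      intro g
      apply Subtype.ext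
      exact (central _).symm
    · intro n hn hone
      have hv : (φH c) ^ n = 1 := by
        have h := congrArg Subtype.val hone
        rwa [SubgroupClass.coe_zpow, OneMemClass.coe_one] at h
      have h2 : ((φH c).2) ^ n = 1 := by
        have h := congrArg Prod.snd hv
        rwa [snd_zpow, Prod.snd_one] at h
      have hc2 : (φH c).2 = Multiplicative.ofAdd ((d : ℤ)) := by rw [φc]
      rw [hc2] at h2
      have h3 := congrArg Multiplicative.toAdd h2
      rw [toAdd_zpow] at h3
      have h4 : n * (d : ℤ) = 0 := by
        rw [zsmul_eq_mul] at h3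
        simpa using h3
      rcases mul_eq_zero.1 h4 with h | h
      · exact hn h
      · exfalso
        omega
    · haveI : NeZero d := ⟨hd.ne'⟩
      set θ2 : Multiplicative ℤ →* Multiplicative (ZMod d) :=
        AddMonoidHom.toMultiplicative (Int.castAddHom (ZMod d)) with hθ2
      set θ : ↥Q →* Equiv.Perm (Fin (Fintype.card X)) × Multiplicative (ZMod d) :=
        (MonoidHom.prodMap (MonoidHom.id _) θ2).comp Q.subtype with hθ
      haveI : Finite θ.range := inferInstance
      haveI := Subgroup.finiteIndex_ker θ
      apply Subgroup.finiteIndex_of_le (H := θ.ker)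
      intro g hg
      rw [MonoidHom.mem_ker] at hg
      have hfst : g.1.1 = 1 := by
        have h := congrArg Prod.fst hg
        simpa [hθ] using h
      have hsnd : θ2 g.1.2 = 1 := by
        have h := congrArg Prod.snd hg
        simpa [hθ] using h
      have hzero : ((Multiplicative.toAdd (g.1.2) : ℤ) : ZMod d) = 0 := by
        have h := congrArg Multiplicative.toAdd hsnd
        simpa [hθ2] using h
      obtain ⟨j, hj⟩ := (ZMod.intCast_zmod_eq_zero_iff_dvd _ d).1 hzero
      rw [Subgroup.mem_zpowers_iff]
      refine ⟨j, ?_⟩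
      apply Subtype.ext
      rw [SubgroupClass.coe_zpow]
      apply Prod.ext
      · rw [fst_zpow]
        have hc1 : (φH c).1 = 1 := congrArg Prod.fst φc
        rw [hc1, one_zpow, hfst]
      · rw [snd_zpow]
        have hc2 : (φH c).2 = Multiplicative.ofAdd ((d : ℤ)) := by rw [φc]
        rw [hc2, ← ofAdd_zsmul]
        have hjd : j • (d : ℤ) = Multiplicative.toAdd (g.1.2) := by
          rw [zsmul_eq_mul, mul_comm]
          exact hj.symm
        rw [hjd]
        exact ofAdd_toAdd _
  · -- torsion elements form a finite set
    refine Set.Finite.subset (prefin 1) ?_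
    intro g hg
    exact ⟨Set.mem_univ _, snd_eq_one_of_fin g hg⟩
  · -- quotient by torsion is ℤ
    refine ⟨(MonoidHom.snd _ _).comp Q.subtype, ?_, ?_⟩
    · intro w
      set m : ℤ := Multiplicative.toAdd w with hmw
      set n : ℕ := m.natAbs + 1 with hndef
      have hnd : (n : ℤ) ≤ (n : ℤ) * d := by
        refine le_mul_of_one_le_right (by positivity) ?_
        exact_mod_cast hd
      have hk0 : 1 ≤ m + (n : ℤ) * d := by omega
      set k : ℕ := (m + (n : ℤ) * d).toNat with hkdef
      have hk1 : 1 ≤ k := by omega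
      have hkz : (k : ℤ) = m + (n : ℤ) * d := by omega
      obtain ⟨b, hb, _, hlb⟩ := spow (dof x0) hs0 k hk1
      rw [hlenof, mul_one] at hlb
      refine ⟨⟨φH b * ((φH c)⁻¹) ^ n, ⟨b, hb, n, rfl⟩⟩, ?_⟩
      show (φH b * ((φH c)⁻¹) ^ n).2 = w
      rw [Prod.snd_mul, invpow, snd_zpow]
      have hb2 : (φH b).2 = Multiplicative.ofAdd ((k : ℤ)) := by
        simp only [hφdef, hlb]
      have hc2 : (φH c).2 = Multiplicative.ofAdd ((d : ℤ)) := by rw [φc]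
      rw [hb2, hc2, ← ofAdd_zsmul, ← ofAdd_add]
      conv_rhs => rw [← ofAdd_toAdd w]
      congr 1
      rw [zsmul_eq_mul]
      have hkz' := hkz
      push_cast at hkz' ⊢
      linarith [hkz', hmw]
    · intro g
      constructor
      · intro h1
        have hg2 : g.1.2 = 1 := h1
        refine isOfFinOrder_iff_pow_eq_one.2
          ⟨Fintype.card (Equiv.Perm (Fin (Fintype.card X))), Fintype.card_pos, ?_⟩
        apply Subtype.ext
        rw [SubgroupClass.coe_pow, OneMemClass.coe_one]
        apply Prod.ext
        · rw [fst_pow, Prod.fst_one]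
          exact pow_card_eq_one
        · rw [snd_pow, Prod.snd_one, hg2, one_pow]
      · intro hf
        exact snd_eq_one_of_fin g hf
end

section
/- Let (X,r) be a finite left non-degenerate idempotent solution, u ∈ Λ and x ∈ X_u = {x : λ_{dx}(u)=x}. Then λ_x = λ_{dx} ∘ λ_u. -/
open Function

variable {X : Type*}

lemma rel1 {X : Type*} (x y : X) : dof x * dof y = dof y * dof y := by
  have : (conGen (simpleRel X)).mk' (FreeMonoid.of x * FreeMonoid.of y)
      = (conGen (simpleRel X)).mk' (FreeMonoid.of y * FreeMonoid.of y) :=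
    (Con.eq _).2 (ConGen.Rel.of _ _ ⟨x, y, rfl, rfl⟩)
  simpa [dof, map_mul] using this

lemma absorb {X : Type*} (n : ℕ) (z w : X) :
    dof z ^ (n + 1) * dof w = dof w ^ (n + 2) := by
  induction n with
  | zero => simpa [pow_succ, pow_one] using rel1 z w
  | succ n ih =>
    calc dof z ^ (n + 2) * dof w
        = dof z ^ (n + 1) * (dof z * dof w) := by rw [pow_succ, mul_assoc]
      _ = dof z ^ (n + 1) * (dof w * dof w) := by rw [rel1]
      _ = (dof z ^ (n + 1) * dof w) * dof w := by rw [mul_assoc]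
      _ = dof w ^ (n + 2) * dof w := by rw [ih]
      _ = dof w ^ (n + 3) := by rw [← pow_succ]

lemma keypow {X : Type*} (L : DerMon X → Equiv.Perm X)
    (act : Equiv.Perm X → DerMon X →* DerMon X)
    (hact : ∀ (f : Equiv.Perm X) (x : X), act f (dof x) = dof (f x))
    (hcoc : ∀ a b : DerMon X, L (a * act (L a) b) = L a * L b)
    (n : ℕ) (x : X) :
    L (dof (((L (dof x)) ^ n) x) ^ (n + 1)) = (L (dof x)) ^ (n + 1) := by
  induction n with
  | zero => simp
  | succ n ih =>
    have h := hcoc (dof (((L (dof x)) ^ n) x) ^ (n + 1)) (dof x)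
    rw [ih, hact] at h
    rw [absorb] at h
    rw [pow_succ (L (dof x)) (n + 1)]
    exact h

/-- For `u ∈ Λ` and `x ∈ X_u`, `λ_x = λ_{dx} ∘ λ_u`. -/
theorem statement11
    {X : Type*} [Fintype X] (r : X × X → X × X) (hYB : YB r) (hidem : r ∘ r = r)
    (L : DerMon X → Equiv.Perm X)
    (hLx : ∀ x y : X, L (dof x) y = lam r x y)
    (hL1 : L 1 = 1)
    (act : Equiv.Perm X → DerMon X →* DerMon X)
    (hact : ∀ (f : Equiv.Perm X) (x : X), act f (dof x) = dof (f x))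
    (hact1 : ∀ a : DerMon X, act 1 a = a)
    (hactmul : ∀ (f g : Equiv.Perm X) (a : DerMon X), act (f * g) a = act f (act g a))
    (len : DerMon X → ℕ)
    (hlenmul : ∀ a b : DerMon X, len (a * b) = len a + len b)
    (hlenof : ∀ x : X, len (dof x) = 1)
    (hcoc : ∀ a b : DerMon X, L (a * act (L a) b) = L a * L b)
    (d : ℕ) (hd : 0 < d) (hdexp : ∀ a : DerMon X, L a ^ d = 1)
    :
    ∀ u ∈ Set.range (qmap L), ∀ x ∈ Xu L d u,
      L (dof x) = L ((dof x : DerMon X) ^ d) * L (dof u) := by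
  rintro u ⟨z, rfl⟩ x hx
  have hx' : L (dof x ^ d) (qmap L z) = x := hx
  -- Step A : L (dof x ^ (d+1)) = L (dof x ^ d) * L (dof (qmap L z))
  have hA : L (dof x ^ (d + 1)) = L (dof x ^ d) * L (dof (qmap L z)) := by
    have h := hcoc (dof x ^ d) (dof (qmap L z))
    rw [hact, hx', ← pow_succ] at h
    exact h
  -- the exponent identity λ_x^(d-1) = λ_x⁻¹
  have hdx : (L (dof x)) ^ d = 1 := hdexp (dof x)
  have hd1 : d - 1 + 1 = d := Nat.succ_pred_eq_of_pos hd
  have hinv : (L (dof x)) ^ (d - 1) = (L (dof x))⁻¹ := by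
    have h2 : L (dof x) * (L (dof x)) ^ (d - 1) = 1 := by
      rw [← pow_succ', hd1, hdx]
    exact eq_inv_of_mul_eq_one_right h2
  have hqx : ((L (dof x)) ^ (d - 1)) x = qmap L x := by
    rw [hinv]; rfl
  -- Step C : L (dof (qmap L x) ^ d) = 1
  have hC : L (dof (qmap L x) ^ d) = 1 := by
    have h := keypow L act hact hcoc (d - 1) x
    rw [hd1, hqx, hdx] at h
    exact h
  -- Step B : L (dof x ^ (d+1)) = L (dof x)
  have hB : L (dof x ^ (d + 1)) = L (dof x) := by
    have h := hcoc (dof x) (dof (qmap L x) ^ d)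
    rw [map_pow, hact] at h
    have hfix : L (dof x) (qmap L x) = x := Equiv.apply_symm_apply _ _
    rw [hfix, ← pow_succ', hC, mul_one] at h
    exact h
  rw [← hB, hA]
end

section
/- Let (X,r) be a finite left non-degenerate idempotent solution. For d a multiple of the exponent of ⟨λ_x : x ∈ X⟩ one has λ_{dx} λ_{dy} = λ_{d λ_{dx}(y)} for all x,y ∈ X; consequently, the binary operation t_{u,x} ∘ t_{v,y} := t_{v, λ_{dx}(y)} makes T(Ge) = ⋃_{u∈Λ} T(G_u) into a left cancellative simple semigroup whose maximal subgroups are the groups T(G_u); in particular T(G_u) ≅ T(G_v) for all u,v ∈ Λ and |X| = |Λ| · |T(G_u)|. -/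
open Function

variable {X : Type*}

/-- `λ_{dx} λ_{dy} = λ_{dλ_{dx}(y)}`, so the operation `x ⋄ y := λ_{dx}(y)`
(corresponding to `t_{u,x} ∘ t_{v,y} := t_{v,λ_{dx}(y)}` under the bijection
`X → T(Gᵉ) = ⋃_{u∈Λ} T(G_u)`, `x ↦ t_{u,x}` for `x ∈ X_u`) makes `T(Gᵉ)` a left
cancellative simple semigroup whose maximal subgroups are the `T(G_u)` (identified
with the sets `X_u`); in particular `T(G_u) ≅ T(G_v)` and `|X| = |Λ|·|T(G_u)|`. -/
theorem statement12
    {X : Type*} [Fintype X] (r : X × X → X × X) (hYB : YB r) (hidem : r ∘ r = r)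
    (L : DerMon X → Equiv.Perm X)
    (hLx : ∀ x y : X, L (dof x) y = lam r x y)
    (hL1 : L 1 = 1)
    (act : Equiv.Perm X → DerMon X →* DerMon X)
    (hact : ∀ (f : Equiv.Perm X) (x : X), act f (dof x) = dof (f x))
    (hact1 : ∀ a : DerMon X, act 1 a = a)
    (hactmul : ∀ (f g : Equiv.Perm X) (a : DerMon X), act (f * g) a = act f (act g a))
    (len : DerMon X → ℕ)
    (hlenmul : ∀ a b : DerMon X, len (a * b) = len a + len b)
    (hlenof : ∀ x : X, len (dof x) = 1)
    (hcoc : ∀ a b : DerMon X, L (a * act (L a) b) = L a * L b)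
    (d : ℕ) (hd : 0 < d) (hdexp : ∀ a : DerMon X, L a ^ d = 1)
    (op : X → X → X) (hop : ∀ x y : X, op x y = L ((dof x : DerMon X) ^ d) y) :
    (∀ x y : X, L ((dof x : DerMon X) ^ d) * L ((dof y : DerMon X) ^ d) =
      L ((dof (L ((dof x : DerMon X) ^ d) y) : DerMon X) ^ d)) ∧
    (∀ x y z : X, op (op x y) z = op x (op y z)) ∧
    (∀ z x y : X, op z x = op z y → x = y) ∧
    (∀ I : Set X, I.Nonempty → (∀ a ∈ I, ∀ x : X, op x a ∈ I ∧ op a x ∈ I) →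
      I = Set.univ) ∧
    (∀ u ∈ Set.range (qmap L),
      (∀ x ∈ Xu L d u, ∀ y ∈ Xu L d u, op x y ∈ Xu L d u) ∧
      u ∈ Xu L d u ∧
      (∀ x ∈ Xu L d u, op u x = x ∧ op x u = x) ∧
      (∀ x ∈ Xu L d u, ∃ y ∈ Xu L d u, op x y = u ∧ op y x = u)) ∧
    (∀ u ∈ Set.range (qmap L), ∀ v ∈ Set.range (qmap L),
      ∃ g : X ≃ X, g '' (Xu L d u) = Xu L d v ∧
        ∀ x ∈ Xu L d u, ∀ y ∈ Xu L d u, g (op x y) = op (g x) (g y)) ∧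
    (∀ u ∈ Set.range (qmap L),
      Nat.card X = Nat.card (Set.range (qmap L)) * Nat.card (Xu L d u)) := by
  obtain ⟨k, rfl⟩ : ∃ k, d = k + 1 := ⟨d - 1, (Nat.succ_pred_eq_of_pos hd).symm⟩
  classical
  -- the defining relation of the derived monoid
  have rel : ∀ x y : X, (dof x : DerMon X) * dof y = dof y * dof y := by
    intro x y
    have h : conGen (simpleRel X) (FreeMonoid.of x * FreeMonoid.of y)
        (FreeMonoid.of y * FreeMonoid.of y) :=
      ConGen.Rel.of _ _ ⟨x, y, rfl, rfl⟩
    have h2 := (conGen (simpleRel X)).eq.2 h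
    simpa [dof, Con.coe_mk', map_mul] using h2
  have absorb1 : ∀ (x z : X) (m : ℕ),
      (dof x : DerMon X) * (dof z) ^ (m + 1) = (dof z) ^ (m + 2) := by
    intro x z m
    calc (dof x : DerMon X) * (dof z) ^ (m + 1)
        = (dof x * dof z) * (dof z) ^ m := by rw [pow_succ', mul_assoc]
      _ = (dof z * dof z) * (dof z) ^ m := by rw [rel]
      _ = (dof z : DerMon X) ^ (m + 2) := by
          rw [mul_assoc, ← pow_succ', ← pow_succ']
  have absorb : ∀ (x z : X) (n m : ℕ),
      (dof x : DerMon X) ^ n * (dof z) ^ (m + 1) = (dof z) ^ (n + m + 1) := by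
    intro x z n
    induction n with
    | zero => intro m; simp
    | succ n ih =>
      intro m
      have h1 : (dof x : DerMon X) ^ (n + 1) * (dof z) ^ (m + 1)
          = (dof x : DerMon X) ^ n * (dof z) ^ (m + 2) := by
        rw [pow_succ, mul_assoc, absorb1]
      rw [h1]
      have h2 := ih (m + 1)
      have h3 : n + (m + 1) + 1 = n + 1 + m + 1 := by omega
      rw [h3] at h2
      exact h2
  -- the cocycle identity in usable form
  have coc' : ∀ (a : DerMon X) (w : X),
      L (a * dof w) = L a * L (dof ((L a)⁻¹ w)) := by
    intro a w
    have h := hcoc a (dof ((L a)⁻¹ w))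
    rwa [hact, ← Equiv.Perm.mul_apply, mul_inv_cancel, Equiv.Perm.one_apply] at h
  -- the recursion for powers
  have hrec : ∀ (x : X) (n : ℕ),
      L ((dof x : DerMon X) ^ (n + 1))
        = L ((dof x : DerMon X) ^ n) * L (dof ((L ((dof x : DerMon X) ^ n))⁻¹ x)) := by
    intro x n
    rw [pow_succ]
    exact coc' _ x
  have cinv : ∀ (x : X) (n : ℕ),
      (L ((dof x : DerMon X) ^ (n + 1)))⁻¹ x
        = qmap L ((L ((dof x : DerMon X) ^ n))⁻¹ x) := by
    intro x n
    rw [hrec, mul_inv_rev, Equiv.Perm.mul_apply]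
    rfl
  have crange : ∀ x : X,
      (L ((dof x : DerMon X) ^ (k + 1)))⁻¹ x ∈ Set.range (qmap L) := by
    intro x
    rw [cinv]
    exact ⟨_, rfl⟩
  -- powers of a single λ are L of powers of a single generator
  have powL : ∀ (x : X) (n : ℕ),
      L (dof x) ^ (n + 1) = L ((dof ((L (dof x) ^ n) x) : DerMon X) ^ (n + 1)) := by
    intro x n
    induction n with
    | zero => simp
    | succ n ih =>
      have hA : (L ((dof ((L (dof x) ^ n) x) : DerMon X) ^ (n + 1)))⁻¹
          ((L (dof x) ^ (n + 1)) x) = x := by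
        rw [← ih, ← Equiv.Perm.mul_apply, inv_mul_cancel, Equiv.Perm.one_apply]
      have h := coc' ((dof ((L (dof x) ^ n) x) : DerMon X) ^ (n + 1))
        ((L (dof x) ^ (n + 1)) x)
      rw [hA] at h
      have habs := absorb ((L (dof x) ^ n) x) ((L (dof x) ^ (n + 1)) x) (n + 1) 0
      rw [pow_one] at habs
      rw [habs] at h
      rw [← ih] at h
      calc L (dof x) ^ (n + 1 + 1) = L (dof x) ^ (n + 1) * L (dof x) := by rw [pow_succ]
        _ = L ((dof ((L (dof x) ^ (n + 1)) x) : DerMon X) ^ (n + 1 + 0 + 1)) := h.symm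
  -- torsion collapse : L((dof w)^d) = 1 for w in the image of q
  have claimA : ∀ w ∈ Set.range (qmap L), L ((dof w : DerMon X) ^ (k + 1)) = 1 := by
    rintro _ ⟨s, rfl⟩
    have hexp := hdexp (dof s)
    have hk : L (dof s) ^ k = (L (dof s))⁻¹ := by
      apply eq_inv_of_mul_eq_one_left
      rw [← pow_succ]
      exact hexp
    have h := powL s k
    rw [hk] at h
    simp only [qmap]
    rw [← h]
    exact hexp
  have actinv : ∀ (f : Equiv.Perm X) (a : DerMon X), act f (act f⁻¹ a) = a := by
    intro f a
    rw [← hactmul, mul_inv_cancel, hact1]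
  have esplit : ∀ z : X,
      L ((dof z : DerMon X) ^ (k + 1 + k + 1))
        = L ((dof z : DerMon X) ^ (k + 1))
          * L ((dof ((L ((dof z : DerMon X) ^ (k + 1)))⁻¹ z) : DerMon X) ^ (k + 1)) := by
    intro z
    have h := hcoc ((dof z : DerMon X) ^ (k + 1))
      (act (L ((dof z : DerMon X) ^ (k + 1)))⁻¹ ((dof z : DerMon X) ^ (k + 1)))
    rw [actinv] at h
    have harith : k + 1 + k + 1 = (k + 1) + (k + 1) := by omega
    rw [harith, pow_add, h]
    congr 2
    rw [map_pow, hact]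
  -- the key identity
  have key : ∀ x y : X, L ((dof x : DerMon X) ^ (k + 1)) * L ((dof y : DerMon X) ^ (k + 1))
      = L ((dof (L ((dof x : DerMon X) ^ (k + 1)) y) : DerMon X) ^ (k + 1)) := by
    intro x y
    have h := hcoc ((dof x : DerMon X) ^ (k + 1)) ((dof y : DerMon X) ^ (k + 1))
    rw [map_pow, hact, absorb] at h
    rw [← h]
    have h2 := esplit (L ((dof x : DerMon X) ^ (k + 1)) y)
    rw [claimA _ (crange _), mul_one] at h2
    exact h2
  -- membership in Xu unfolded
  have memXu : ∀ (u x : X), x ∈ Xu L (k + 1) u ↔ L ((dof x : DerMon X) ^ (k + 1)) u = x :=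
    fun u x => Iff.rfl
  -- closure of Xu under op
  have hclosure : ∀ (u : X), ∀ x ∈ Xu L (k + 1) u, ∀ y ∈ Xu L (k + 1) u,
      op x y ∈ Xu L (k + 1) u := by
    intro u x hx y hy
    have hy' : L ((dof y : DerMon X) ^ (k + 1)) u = y := hy
    show L ((dof (op x y) : DerMon X) ^ (k + 1)) u = op x y
    rw [hop x y, ← key, Equiv.Perm.mul_apply, hy']
  refine ⟨key, ?_, ?_, ?_, ?_, ?_, ?_⟩
  · -- associativity
    intro x y z
    rw [hop (op x y) z, hop x y, ← key, hop x (op y z), hop y z, Equiv.Perm.mul_apply]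
  · -- left cancellativity
    intro z x y h
    rw [hop z x, hop z y] at h
    exact (L ((dof z : DerMon X) ^ (k + 1))).injective h
  · -- simplicity
    rintro I ⟨a, haI⟩ hI
    apply Set.eq_univ_of_forall
    intro x
    have h := (hI a haI ((L ((dof a : DerMon X) ^ (k + 1)))⁻¹ x)).2
    rwa [hop, ← Equiv.Perm.mul_apply, mul_inv_cancel, Equiv.Perm.one_apply] at h
  · -- group structure on Xu
    intro u hu
    have hue : L ((dof u : DerMon X) ^ (k + 1)) = 1 := claimA u hu
    have huXu : u ∈ Xu L (k + 1) u := by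
      show L ((dof u : DerMon X) ^ (k + 1)) u = u
      rw [hue, Equiv.Perm.one_apply]
    refine ⟨hclosure u, huXu, ?_, ?_⟩
    · intro x hx
      have hx' : L ((dof x : DerMon X) ^ (k + 1)) u = x := hx
      constructor
      · rw [hop u x, hue, Equiv.Perm.one_apply]
      · rw [hop x u]; exact hx'
    · intro x hx
      have hx' : L ((dof x : DerMon X) ^ (k + 1)) u = x := hx
      let f : (Xu L (k + 1) u) → (Xu L (k + 1) u) :=
        fun y => ⟨op x y, hclosure u x hx y.1 y.2⟩
      have hfinj : Function.Injective f := by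
        intro a b hab
        have h1 := congrArg Subtype.val hab
        simp only [f] at h1
        rw [hop x a.1, hop x b.1] at h1
        exact Subtype.ext ((L ((dof x : DerMon X) ^ (k + 1))).injective h1)
      obtain ⟨⟨y, hy⟩, hxy⟩ := Finite.injective_iff_surjective.mp hfinj ⟨u, huXu⟩
      have hopxy : op x y = u := congrArg Subtype.val hxy
      refine ⟨y, hy, hopxy, ?_⟩
      have h1 : L ((dof x : DerMon X) ^ (k + 1)) * L ((dof y : DerMon X) ^ (k + 1)) = 1 := by
        rw [key x y, ← hop x y, hopxy, hue]
      have h2 : L ((dof y : DerMon X) ^ (k + 1)) * L ((dof x : DerMon X) ^ (k + 1)) = 1 := by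
        rw [eq_inv_of_mul_eq_one_left h1, mul_inv_cancel]
      have h3 : L ((dof y : DerMon X) ^ (k + 1)) (L ((dof x : DerMon X) ^ (k + 1)) u) = u := by
        rw [← Equiv.Perm.mul_apply, h2, Equiv.Perm.one_apply]
      rw [hx'] at h3
      rw [hop y x]
      exact h3
  · -- isomorphism of the maximal subgroups
    intro u hu v hv
    have hue : L ((dof u : DerMon X) ^ (k + 1)) = 1 := claimA u hu
    have hve : L ((dof v : DerMon X) ^ (k + 1)) = 1 := claimA v hv
    have hφmem : ∀ x ∈ Xu L (k + 1) u, op x v ∈ Xu L (k + 1) v := by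
      intro x hx
      show L ((dof (op x v) : DerMon X) ^ (k + 1)) v = op x v
      rw [hop x v, ← key, hve, mul_one]
    have hψmem : ∀ z ∈ Xu L (k + 1) v, op z u ∈ Xu L (k + 1) u := by
      intro z hz
      show L ((dof (op z u) : DerMon X) ^ (k + 1)) u = op z u
      rw [hop z u, ← key, hue, mul_one]
    have hψφ : ∀ x ∈ Xu L (k + 1) u, op (op x v) u = x := by
      intro x hx
      have hx' : L ((dof x : DerMon X) ^ (k + 1)) u = x := hx
      rw [hop (op x v) u, hop x v, ← key, hve, mul_one]
      exact hx'
    have hφψ : ∀ z ∈ Xu L (k + 1) v, op (op z u) v = z := by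
      intro z hz
      have hz' : L ((dof z : DerMon X) ^ (k + 1)) v = z := hz
      rw [hop (op z u) v, hop z u, ← key, hue, mul_one]
      exact hz'
    let eST : {x // x ∈ Xu L (k + 1) u} ≃ {x // x ∈ Xu L (k + 1) v} :=
      { toFun := fun x => ⟨op x.1 v, hφmem x.1 x.2⟩
        invFun := fun z => ⟨op z.1 u, hψmem z.1 z.2⟩
        left_inv := fun x => Subtype.ext (hψφ x.1 x.2)
        right_inv := fun z => Subtype.ext (hφψ z.1 z.2) }
    refine ⟨eST.extendSubtype, ?_, ?_⟩
    · ext z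
      constructor
      · rintro ⟨x, hx, rfl⟩
        rw [Equiv.extendSubtype_apply_of_mem eST x hx]
        exact hφmem x hx
      · intro hz
        refine ⟨op z u, hψmem z hz, ?_⟩
        rw [Equiv.extendSubtype_apply_of_mem eST _ (hψmem z hz)]
        exact hφψ z hz
    · intro x hx y hy
      rw [Equiv.extendSubtype_apply_of_mem eST _ (hclosure u x hx y hy),
        Equiv.extendSubtype_apply_of_mem eST x hx,
        Equiv.extendSubtype_apply_of_mem eST y hy]
      show op (op x y) v = op (op x v) (op y v)
      rw [hop (op x y) v, hop x y, ← key, hop (op x v) (op y v), hop x v, ← key,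
        hve, mul_one, hop y v, Equiv.Perm.mul_apply]
  · -- the counting formula
    intro u hu
    have hue : L ((dof u : DerMon X) ^ (k + 1)) = 1 := claimA u hu
    have hmem2 : ∀ x : X, op x u ∈ Xu L (k + 1) u := by
      intro x
      show L ((dof (op x u) : DerMon X) ^ (k + 1)) u = op x u
      rw [hop x u, ← key, hue, mul_one]
    have Ψ : X ≃ (Set.range (qmap L)) × (Xu L (k + 1) u) :=
      { toFun := fun x => (⟨(L ((dof x : DerMon X) ^ (k + 1)))⁻¹ x, crange x⟩,
          ⟨op x u, hmem2 x⟩)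
        invFun := fun p => op p.2.1 p.1.1
        left_inv := by
          intro x
          show op (op x u) ((L ((dof x : DerMon X) ^ (k + 1)))⁻¹ x) = x
          rw [hop (op x u) _, hop x u, ← key, hue, mul_one, ← Equiv.Perm.mul_apply, mul_inv_cancel, Equiv.Perm.one_apply]
        right_inv := by
          rintro ⟨⟨v, hv⟩, ⟨y, hy⟩⟩
          have hy' : L ((dof y : DerMon X) ^ (k + 1)) u = y := hy
          have hve : L ((dof v : DerMon X) ^ (k + 1)) = 1 := claimA v hv
          have he : L ((dof (op y v) : DerMon X) ^ (k + 1)) = L ((dof y : DerMon X) ^ (k + 1)) := by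
            rw [hop y v, ← key, hve, mul_one]
          refine Prod.ext (Subtype.ext ?_) (Subtype.ext ?_)
          · show (L ((dof (op y v) : DerMon X) ^ (k + 1)))⁻¹ (op y v) = v
            rw [he, hop y v, ← Equiv.Perm.mul_apply, inv_mul_cancel, Equiv.Perm.one_apply]
          · show op (op y v) u = y
            rw [hop (op y v) u, he, hy']
        }
    rw [Nat.card_congr Ψ, Nat.card_prod]
end

section
/- Let (X,r) be a finite left non-degenerate idempotent solution, M = M(X,r) its structure monoid, and t ∈ X fixed. Then every element w ∈ M of length n ≥ 1 can be written as w = t^{n-1} ∘ x for some x ∈ X. Consequently, for any field K, the structure algebra K[M] is a finite left module over the polynomial subalgebra K[t], hence K[M] is left Noetherian of Gelfand–Kirillov dimension one. -/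
open Function

variable {X : Type*}

/-- the defining relation `x ∘ y = λ_x(y) ∘ ρ_y(x)` of the structure monoid. -/
def structRel (r : X × X → X × X) : FreeMonoid X → FreeMonoid X → Prop :=
  fun a b => ∃ x y : X, a = FreeMonoid.of x * FreeMonoid.of y ∧
    b = FreeMonoid.of (lam r x y) * FreeMonoid.of (rho r y x)

/-- the structure monoid `M(X,r) = ⟨x ∈ X | x ∘ y = λ_x(y) ∘ ρ_y(x)⟩`. -/
abbrev StrMon {X : Type*} (r : X × X → X × X) := (conGen (structRel r)).Quotient

def smk {X : Type*} (r : X × X → X × X) : FreeMonoid X →* StrMon r :=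
  (conGen (structRel r)).mk'

-- Lemma A: surjectivity of r(t,·) onto the range of r
theorem keyA [Finite X] (r : X × X → X × X)
    (hnd : ∀ x : X, Function.Bijective (lam r x)) (hidem : r ∘ r = r)
    (t x y : X) : ∃ z, r (t, z) = r (x, y) := by
  have hfix : ∀ p, r (r p) = r p := fun p => congrFun hidem p
  set S := Set.range r with hS
  have hfix' : ∀ p ∈ S, r p = p := by rintro p ⟨q, rfl⟩; exact hfix q
  have h1 : ∀ p ∈ S, lam r p.1 p.2 = p.1 := by
    intro p hp
    have := hfix' p hp
    calc lam r p.1 p.2 = (r (p.1, p.2)).1 := rfl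
    _ = p.1 := by rw [Prod.mk.eta, this]
  let f : X → S := fun z => ⟨r (t, z), ⟨(t, z), rfl⟩⟩
  have inj_f : Function.Injective f := by
    intro z1 z2 h
    have : (r (t, z1)).1 = (r (t, z2)).1 := by
      have h' : r (t, z1) = r (t, z2) := congrArg Subtype.val h
      rw [h']
    exact (hnd t).1 this
  let g : S → X := fun p => (p : X × X).1
  have inj_g : Function.Injective g := by
    rintro ⟨p, hp⟩ ⟨q, hq⟩ h
    simp only [g] at h
    have h2 : lam r p.1 p.2 = p.1 := h1 p hp
    have h3 : lam r q.1 q.2 = q.1 := h1 q hq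
    rw [← h] at h3
    refine Subtype.ext (Prod.ext h ((hnd p.1).1 ?_))
    show lam r p.1 p.2 = lam r p.1 q.2
    rw [h2, h3]
  have hcard : Nat.card X = Nat.card S :=
    le_antisymm (Nat.card_le_card_of_injective f inj_f)
      (Nat.card_le_card_of_injective g inj_g)
  have hbij : Function.Bijective f :=
    (Nat.bijective_iff_injective_and_card f).2 ⟨inj_f, hcard⟩
  obtain ⟨z, hz⟩ := hbij.2 ⟨r (x, y), ⟨(x, y), rfl⟩⟩
  exact ⟨z, congrArg Subtype.val hz⟩

theorem smk_rel (r : X × X → X × X) (x y : X) :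
    smk r (FreeMonoid.of x * FreeMonoid.of y) =
      smk r (FreeMonoid.of (lam r x y) * FreeMonoid.of (rho r y x)) :=
  (Con.eq _).mpr (ConGen.Rel.of _ _ ⟨x, y, rfl, rfl⟩)

theorem keyB [Finite X] (r : X × X → X × X)
    (hnd : ∀ x : X, Function.Bijective (lam r x)) (hidem : r ∘ r = r)
    (t x y : X) : ∃ z, smk r (FreeMonoid.of x * FreeMonoid.of y) =
      smk r (FreeMonoid.of t * FreeMonoid.of z) := by
  obtain ⟨z, hz⟩ := keyA r hnd hidem t x y
  refine ⟨z, ?_⟩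
  rw [smk_rel r x y, smk_rel r t z]
  have h1 : lam r x y = lam r t z := by
    show (r (x,y)).1 = (r (t,z)).1; rw [hz]
  have h2 : rho r y x = rho r z t := by
    show (r (x,y)).2 = (r (t,z)).2; rw [hz]
  rw [h1, h2]

theorem main_lemma [Finite X] (r : X × X → X × X)
    (hnd : ∀ x : X, Function.Bijective (lam r x)) (hidem : r ∘ r = r) (t : X) :
    ∀ n (w : FreeMonoid X), w.length = n → w ≠ 1 →
      ∃ x : X, smk r w = smk r (FreeMonoid.of t) ^ (n - 1) * smk r (FreeMonoid.of x) := by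
  intro n
  induction n using Nat.strong_induction_on with
  | _ n ih =>
    intro w hlen hne
    induction w using FreeMonoid.casesOn with
    | one => exact absurd rfl hne
    | of_mul x w =>
      induction w using FreeMonoid.casesOn with
      | one =>
        refine ⟨x, ?_⟩
        have : n = 1 := by simpa [FreeMonoid.length_mul, FreeMonoid.length_of,
          FreeMonoid.length_one] using hlen.symm
        subst this
        simp
      | of_mul y w =>
        clear hne
        have hlw : (FreeMonoid.of x * (FreeMonoid.of y * w)).length = 2 + w.length := by
          simp [FreeMonoid.length_mul, FreeMonoid.length_of]; omega
        have hn : n = 2 + w.length := by rw [← hlen, hlw]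
        obtain ⟨z, hz⟩ := keyB r hnd hidem t x y
        have step1 : smk r (FreeMonoid.of x * (FreeMonoid.of y * w)) =
            smk r (FreeMonoid.of t) * smk r (FreeMonoid.of z * w) := by
          rw [← mul_assoc, map_mul, hz, map_mul, mul_assoc, ← map_mul]
        have hlen2 : (FreeMonoid.of z * w).length = n - 1 := by
          simp [FreeMonoid.length_mul, FreeMonoid.length_of]; omega
        have hne2 : (FreeMonoid.of z * w) ≠ 1 := by
          intro h
          have := congrArg FreeMonoid.length h
          simp [FreeMonoid.length_mul, FreeMonoid.length_of, FreeMonoid.length_one] at this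
        obtain ⟨x', hx'⟩ := ih (n-1) (by omega) (FreeMonoid.of z * w) hlen2 hne2
        refine ⟨x', ?_⟩
        rw [step1, hx', ← mul_assoc, ← pow_succ']
        congr 2
        omega

/-- the length hom on the free monoid. -/
def lenF : FreeMonoid X →* Multiplicative ℕ where
  toFun w := Multiplicative.ofAdd w.length
  map_one' := rfl
  map_mul' a b := by
    simp [FreeMonoid.length_mul, ← ofAdd_add]

/-- length descends to the structure monoid. -/
def lenM (r : X × X → X × X) : StrMon r →* Multiplicative ℕ :=
  (conGen (structRel r)).lift lenF (Con.conGen_le.mpr (by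
    rintro a b ⟨x, y, rfl, rfl⟩
    show lenF _ = lenF _
    simp [lenF, FreeMonoid.length_mul, FreeMonoid.length_of]
    rfl))

theorem lenM_smk (r : X × X → X × X) (w : FreeMonoid X) :
    lenM r (smk r w) = Multiplicative.ofAdd w.length :=
  Con.lift_mk' _ _

theorem lenM_pow (r : X × X → X × X) (t : X) (k : ℕ) :
    lenM r (smk r (FreeMonoid.of t) ^ k) = Multiplicative.ofAdd k := by
  rw [map_pow, lenM_smk]
  show Multiplicative.ofAdd (FreeMonoid.of t).length ^ k = _
  rw [FreeMonoid.length_of]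
  apply Multiplicative.toAdd.injective
  simp

theorem pow_t_injective (r : X × X → X × X) (t : X) :
    Function.Injective (fun k : ℕ => smk r (FreeMonoid.of t) ^ k) := by
  intro k l h
  have := congrArg (lenM r) h
  rw [lenM_pow, lenM_pow] at this
  exact_mod_cast congrArg Multiplicative.toAdd this

theorem length_pow_of (t : X) (k : ℕ) : (FreeMonoid.of t ^ k).length = k := by
  induction k with
  | zero => rfl
  | succ k ih => rw [pow_succ, FreeMonoid.length_mul, ih, FreeMonoid.length_of]

theorem span_subalg_top {K : Type*} [Field K] {M : Type*} [Monoid M]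
    (A : Subalgebra K (MonoidAlgebra K M)) (s : Set (MonoidAlgebra K M))
    (h : ∀ m : M, MonoidAlgebra.of K M m ∈ Submodule.span (↥A) s) :
    Submodule.span (↥A) s = ⊤ := by
  rw [eq_top_iff]
  rintro f -
  induction f using MonoidAlgebra.induction_on with
  | of g => exact h g
  | add f g hf hg => exact Submodule.add_mem _ hf hg
  | smul c f hf => exact Submodule.smul_of_tower_mem _ c hf


/-- Every element of `M(X,r)` of length `n ≥ 1` is of the form `t^{n-1} ∘ x`,
so `K[M(X,r)]` is a finite left module over the polynomial subalgebra `K[t]`;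
hence it is left Noetherian of Gelfand–Kirillov dimension one (its growth,
measured by the spans `V n` of the images of words of length `≤ n`, is linear). -/
theorem statement16 {X : Type*} [Fintype X] [Nonempty X]
    (r : X × X → X × X) (hYB : YB r)
    (hnd : ∀ x : X, Function.Bijective (lam r x)) (hidem : r ∘ r = r)
    (t : X) (K : Type*) [Field K]
    (V : ℕ → Submodule K (MonoidAlgebra K (StrMon r)))
    (hV : ∀ n : ℕ, V n = Submodule.span K
      ((fun w : FreeMonoid X => MonoidAlgebra.of K (StrMon r) (smk r w)) ''
        {w : FreeMonoid X | w.length ≤ n})) :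
    (∀ w : FreeMonoid X, w ≠ 1 → ∃ x : X,
      smk r w = smk r (FreeMonoid.of t) ^ (w.length - 1) * smk r (FreeMonoid.of x)) ∧
    Module.Finite
      (Algebra.adjoin K {(MonoidAlgebra.of K (StrMon r) (smk r (FreeMonoid.of t)))})
      (MonoidAlgebra K (StrMon r)) ∧
    IsNoetherianRing (MonoidAlgebra K (StrMon r)) ∧
    (∃ C : ℕ, ∀ n : ℕ, Module.finrank K (V n) ≤ C * (n + 1)) ∧
    (∀ n : ℕ, n + 1 ≤ Module.finrank K (V n)) := by
  classical
  have hpart1 : ∀ w : FreeMonoid X, w ≠ 1 → ∃ x : X,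
      smk r w = smk r (FreeMonoid.of t) ^ (w.length - 1) * smk r (FreeMonoid.of x) :=
    fun w hw => main_lemma r hnd hidem t w.length w rfl hw
  set R' := MonoidAlgebra K (StrMon r) with hR'
  set T : R' := MonoidAlgebra.of K (StrMon r) (smk r (FreeMonoid.of t)) with hT
  set A : Subalgebra K R' := Algebra.adjoin K {T} with hA
  set B : X → R' := fun x => MonoidAlgebra.of K (StrMon r) (smk r (FreeMonoid.of x)) with hB
  -- the `of` image of any monoid element lies in the A-span of {1} ∪ range B
  have hmem : ∀ m : StrMon r,
      MonoidAlgebra.of K (StrMon r) m ∈ Submodule.span (↥A) (insert 1 (Set.range B)) := by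
    intro m
    obtain ⟨w, rfl⟩ := Con.mk'_surjective (c := conGen (structRel r)) m
    by_cases hw : w = 1
    · subst hw
      rw [show ((conGen (structRel r)).mk' 1 : StrMon r) = 1 from map_one _, map_one]
      exact Submodule.subset_span (Set.mem_insert _ _)
    · obtain ⟨x, hx⟩ := hpart1 w hw
      have : MonoidAlgebra.of K (StrMon r) (smk r w) =
          T ^ (w.length - 1) * B x := by rw [hx, map_mul, map_pow]
      rw [show ((conGen (structRel r)).mk' w : StrMon r) = smk r w from rfl, this]
      have hTA : T ^ (w.length - 1) ∈ A :=
        pow_mem (Algebra.subset_adjoin (Set.mem_singleton T)) _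
      exact Submodule.smul_mem _ (⟨T ^ (w.length - 1), hTA⟩ : A)
        (Submodule.subset_span (Set.mem_insert_of_mem _ ⟨x, rfl⟩))
  have hfin : Module.Finite (↥A) R' := by
    refine ⟨⟨insert 1 (Finset.univ.image B), ?_⟩⟩
    rw [Finset.coe_insert, Finset.coe_image, Finset.coe_univ, Set.image_univ]
    exact span_subalg_top A _ hmem
  have hnoethA : IsNoetherianRing (↥A) := by
    have hrange : ∀ a : ↥A, ∃ p : Polynomial K, Polynomial.aeval T p = (a : R') := by
      intro a
      have h2 : (a : R') ∈ Algebra.adjoin K {T} := a.2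
      rw [Algebra.adjoin_singleton_eq_range_aeval] at h2
      exact h2
    let g : Polynomial K →+* ↥A :=
      ((Polynomial.aeval T).codRestrict A
        (fun p => Polynomial.aeval_mem_adjoin_singleton K T)).toRingHom
    have hg : Function.Surjective g := by
      intro a
      obtain ⟨p, hp⟩ := hrange a
      exact ⟨p, Subtype.ext hp⟩
    exact isNoetherianRing_of_surjective (Polynomial K) (↥A) g hg
  have hnoeth : IsNoetherianRing R' := by
    have h1 : IsNoetherian (↥A) R' := isNoetherian_of_isNoetherianRing_of_finite (↥A) R'
    have h2 : IsNoetherian R' R' := isNoetherian_of_tower (↥A) h1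
    exact isNoetherianRing_iff.mpr h2
  refine ⟨hpart1, hfin, hnoeth, ?_, ?_⟩
  · -- upper bound
    refine ⟨Fintype.card X + 1, fun n => ?_⟩
    set sF : Finset R' := insert 1
      (((Finset.range n) ×ˢ (Finset.univ : Finset X)).image fun p => T ^ p.1 * B p.2) with hsF
    have hVn : V n ≤ Submodule.span K (↑sF : Set R') := by
      rw [hV]
      refine Submodule.span_le.mpr ?_
      rintro _ ⟨w, hwn, rfl⟩
      by_cases hw : w = 1
      · subst hw
        apply Submodule.subset_span
        simp only [map_one, sF, Finset.coe_insert, Set.mem_insert_iff]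
        exact Or.inl trivial
      · obtain ⟨x, hx⟩ := hpart1 w hw
        have hw1 : 1 ≤ w.length := by
          rcases Nat.eq_zero_or_pos w.length with h | h
          · exact absurd (FreeMonoid.length_eq_zero.mp h) hw
          · exact h
        apply Submodule.subset_span
        simp only [Finset.coe_insert, Set.mem_insert_iff, Finset.coe_image, Set.mem_image, sF]
        right
        refine ⟨(w.length - 1, x), ?_, ?_⟩
        · simp only [Finset.mem_coe, Finset.mem_product, Finset.mem_range, Finset.mem_univ,
            and_true]
          have hwn' : w.length ≤ n := hwn
          omega
        · simp only [hx, map_mul, map_pow]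
          rfl
    haveI : FiniteDimensional K (Submodule.span K (↑sF : Set R')) :=
      FiniteDimensional.span_of_finite K sF.finite_toSet
    haveI : FiniteDimensional K (V n) := Submodule.finiteDimensional_of_le hVn
    calc Module.finrank K (V n) ≤ Module.finrank K (Submodule.span K (↑sF : Set R')) :=
          Submodule.finrank_mono hVn
      _ ≤ sF.card := finrank_span_finset_le_card sF
      _ ≤ 1 + n * Fintype.card X := by
          refine (Finset.card_insert_le _ _).trans ?_
          have := Finset.card_image_le (s := (Finset.range n) ×ˢ (Finset.univ : Finset X))
            (f := fun p => T ^ p.1 * B p.2)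
          simp only [Finset.card_product, Finset.card_range, Finset.card_univ] at this
          omega
      _ ≤ (Fintype.card X + 1) * (n + 1) := by nlinarith [Fintype.card X, n]
  · -- lower bound
    intro n
    set v : Fin (n + 1) → R' := fun k =>
      MonoidAlgebra.of K (StrMon r) (smk r (FreeMonoid.of t) ^ (k : ℕ)) with hv
    have hinj : Function.Injective (fun k : Fin (n + 1) => smk r (FreeMonoid.of t) ^ (k : ℕ)) :=
      fun k l h => Fin.val_injective (pow_t_injective r t h)
    have li : LinearIndependent K v := by
      have h0 := (MonoidAlgebra.basis (StrMon r) K).linearIndependent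
      have h1 := h0.comp _ hinj
      convert h1 using 2 with k
      funext k
      simp [hv]
    have hspan : Submodule.span K (Set.range v) ≤ V n := by
      rw [hV]
      refine Submodule.span_le.mpr ?_
      rintro _ ⟨k, rfl⟩
      apply Submodule.subset_span
      refine ⟨FreeMonoid.of t ^ (k : ℕ), ?_, ?_⟩
      · show (FreeMonoid.of t ^ (k : ℕ)).length ≤ n
        rw [length_pow_of]
        omega
      · simp only [map_pow, hv]
    set sF : Finset R' := insert 1
      (((Finset.range n) ×ˢ (Finset.univ : Finset X)).image fun p => T ^ p.1 * B p.2) with hsF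
    have hVn : V n ≤ Submodule.span K (↑sF : Set R') := by
      rw [hV]
      refine Submodule.span_le.mpr ?_
      rintro _ ⟨w, hwn, rfl⟩
      by_cases hw : w = 1
      · subst hw
        apply Submodule.subset_span
        simp only [map_one, sF, Finset.coe_insert, Set.mem_insert_iff]
        exact Or.inl trivial
      · obtain ⟨x, hx⟩ := hpart1 w hw
        have hw1 : 1 ≤ w.length := by
          rcases Nat.eq_zero_or_pos w.length with h | h
          · exact absurd (FreeMonoid.length_eq_zero.mp h) hw
          · exact h
        apply Submodule.subset_span
        simp only [Finset.coe_insert, Set.mem_insert_iff, Finset.coe_image, Set.mem_image, sF]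
        right
        refine ⟨(w.length - 1, x), ?_, ?_⟩
        · simp only [Finset.mem_coe, Finset.mem_product, Finset.mem_range, Finset.mem_univ,
            and_true]
          have hwn' : w.length ≤ n := hwn
          omega
        · simp only [hx, map_mul, map_pow]
          rfl
    haveI : FiniteDimensional K (Submodule.span K (↑sF : Set R')) :=
      FiniteDimensional.span_of_finite K sF.finite_toSet
    haveI : FiniteDimensional K (V n) := Submodule.finiteDimensional_of_le hVn
    have hcount : Module.finrank K (Submodule.span K (Set.range v)) = n + 1 := by
      rw [finrank_span_eq_card li, Fintype.card_fin]
    calc n + 1 = Module.finrank K (Submodule.span K (Set.range v)) := hcount.symm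
      _ ≤ Module.finrank K (V n) := Submodule.finrank_mono hspan
end

section
/- Let (X,·) be a group with identity 1 and φ an automorphism of (X,·). Then r(x,y) := (x·φ(y), 1) defines a left non-degenerate idempotent set-theoretic solution of the Yang–Baxter equation on X, and its structure monoid M(X,r) is cancellative. -/
open Function

variable {X : Type*}

section Aux

variable {X : Type*} [Group X] (φ : X ≃* X)

def psi : Multiplicative ℤ →* MulAut X := zpowersHom (MulAut X) (φ : MulAut X)

def fhom : FreeMonoid X →* X ⋊[psi φ] (Multiplicative ℤ) :=
  FreeMonoid.lift fun x => ⟨x, Multiplicative.ofAdd 1⟩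

lemma fhom_of (x : X) : fhom φ (FreeMonoid.of x) = ⟨x, Multiplicative.ofAdd 1⟩ :=
  FreeMonoid.lift_eval_of _ _

lemma psi_one : (psi φ (Multiplicative.ofAdd 1) : MulAut X) = (φ : MulAut X) := by
  simp [psi, zpowersHom_apply]

-- lam/rho under hr
variable {r : X × X → X × X} (hr : ∀ x y : X, r (x, y) = (x * φ y, 1))

section
include hr

lemma lamEq (x y : X) : lam r x y = x * φ y := by simp [lam, hr]

lemma rhoEq (x y : X) : rho r y x = 1 := by simp [rho, hr]

lemma fhom_rel : ∀ u v : FreeMonoid X, structRel r u v → fhom φ u = fhom φ v := by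
  rintro u v ⟨x, y, rfl, rfl⟩
  rw [map_mul, map_mul, fhom_of, fhom_of, fhom_of, fhom_of,
    lamEq φ hr, rhoEq φ hr, SemidirectProduct.mul_def, SemidirectProduct.mul_def]
  ext <;> simp [psi_one]

lemma ker_le : conGen (structRel r) ≤ Con.ker (fhom φ) :=
  Con.conGen_le.mpr fun u v h => fhom_rel φ hr u v h

/-- normal form lemma -/
lemma nf : ∀ l : List X, l ≠ [] → ∃ c : X,
    (conGen (structRel r)) (FreeMonoid.ofList l)
      (FreeMonoid.ofList (c :: List.replicate (l.length - 1) 1)) ∧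
    fhom φ (FreeMonoid.ofList l) = ⟨c, Multiplicative.ofAdd (l.length : ℤ)⟩ := by
  intro l
  induction l with
  | nil => simp
  | cons x rest ih =>
    intro _
    rcases eq_or_ne rest [] with rfl | hne
    · exact ⟨x, by simpa using (conGen (structRel r)).refl _, by
        simp [FreeMonoid.ofList_cons, fhom_of]⟩
    · obtain ⟨c', h1, h2⟩ := ih hne
      refine ⟨x * φ c', ?_, ?_⟩
      · have step1 : (conGen (structRel r)) (FreeMonoid.ofList (x :: rest))
            (FreeMonoid.of x * FreeMonoid.ofList (c' :: List.replicate (rest.length - 1) 1)) := by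
          rw [FreeMonoid.ofList_cons]
          exact (conGen (structRel r)).mul ((conGen (structRel r)).refl _) h1
        have step2 : (conGen (structRel r)) (FreeMonoid.of x * FreeMonoid.of c')
            (FreeMonoid.of (x * φ c') * FreeMonoid.of (1 : X)) := by
          apply ConGen.Rel.of
          exact ⟨x, c', rfl, by rw [lamEq φ hr, rhoEq φ hr]⟩
        have step3 : (conGen (structRel r))
            (FreeMonoid.of x * FreeMonoid.ofList (c' :: List.replicate (rest.length - 1) 1))
            (FreeMonoid.ofList ((x * φ c') :: List.replicate ((x :: rest).length - 1) 1)) := by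
          have h4 : FreeMonoid.of x * FreeMonoid.ofList (c' :: List.replicate (rest.length - 1) 1)
              = (FreeMonoid.of x * FreeMonoid.of c') *
                FreeMonoid.ofList (List.replicate (rest.length - 1) 1) := by
            rw [FreeMonoid.ofList_cons, mul_assoc]
          have h5 : FreeMonoid.ofList ((x * φ c') :: List.replicate ((x :: rest).length - 1) 1)
              = (FreeMonoid.of (x * φ c') * FreeMonoid.of (1 : X)) *
                FreeMonoid.ofList (List.replicate (rest.length - 1) 1) := by
            have : (x :: rest).length - 1 = (rest.length - 1) + 1 := by
              have hpos : 0 < rest.length := List.length_pos_iff.mpr hne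
              simp only [List.length_cons]
              omega
            rw [this, List.replicate_succ, FreeMonoid.ofList_cons, FreeMonoid.ofList_cons,
              mul_assoc]
          rw [h4, h5]
          exact (conGen (structRel r)).mul step2 ((conGen (structRel r)).refl _)
        exact (conGen (structRel r)).trans step1 step3
      · rw [FreeMonoid.ofList_cons, map_mul, fhom_of, h2, SemidirectProduct.mul_def]
        ext
        · simp [psi_one]
        · simp
          omega

lemma fhom_inj (w v : FreeMonoid X) (h : fhom φ w = fhom φ v) :
    (conGen (structRel r)) w v := by
  rcases eq_or_ne (FreeMonoid.toList w) [] with hw | hw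
  · rcases eq_or_ne (FreeMonoid.toList v) [] with hv | hv
    · have : w = v := by
        rw [← FreeMonoid.ofList_toList w, ← FreeMonoid.ofList_toList v, hw, hv]
      rw [this]; exact (conGen (structRel r)).refl _
    · obtain ⟨c, _, h2⟩ := nf φ hr (FreeMonoid.toList v) hv
      rw [FreeMonoid.ofList_toList] at h2
      have hw1 : w = 1 := by rw [← FreeMonoid.ofList_toList w, hw]; rfl
      rw [hw1, map_one, h2] at h
      have := congrArg SemidirectProduct.right h
      simp at this
      have : ((FreeMonoid.toList v).length : ℤ) = 0 := by
        have h3 := congrArg Multiplicative.toAdd this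
        simpa using h3.symm
      simp at this
      exact absurd this (by simpa using hv)
  · rcases eq_or_ne (FreeMonoid.toList v) [] with hv | hv
    · obtain ⟨c, _, h2⟩ := nf φ hr (FreeMonoid.toList w) hw
      rw [FreeMonoid.ofList_toList] at h2
      have hv1 : v = 1 := by rw [← FreeMonoid.ofList_toList v, hv]; rfl
      rw [hv1, map_one, h2] at h
      have := congrArg SemidirectProduct.right h
      have : ((FreeMonoid.toList w).length : ℤ) = 0 := by
        have h3 := congrArg Multiplicative.toAdd this
        simpa using h3
      simp at this
      exact absurd this (by simpa using hw)
    · obtain ⟨c, hc1, hc2⟩ := nf φ hr (FreeMonoid.toList w) hw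
      obtain ⟨c', hc1', hc2'⟩ := nf φ hr (FreeMonoid.toList v) hv
      rw [FreeMonoid.ofList_toList] at hc1 hc2 hc1' hc2'
      rw [hc2, hc2'] at h
      have hcc : c = c' := congrArg SemidirectProduct.left h
      have hlen : (FreeMonoid.toList w).length = (FreeMonoid.toList v).length := by
        have := congrArg SemidirectProduct.right h
        have h3 := congrArg Multiplicative.toAdd this
        simp at h3
        exact_mod_cast h3
      rw [hcc, hlen] at hc1
      exact (conGen (structRel r)).trans hc1 ((conGen (structRel r)).symm hc1')

end

end Aux


/-- For a group `(X,·)` and `φ ∈ Aut(X,·)`, `r(x,y) = (x·φ(y), 1)` is a left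
non-degenerate idempotent solution of the Yang–Baxter equation whose structure
monoid `M(X,r)` is cancellative. -/
theorem statement17 {X : Type*} [Group X] (φ : X ≃* X)
    (r : X × X → X × X) (hr : ∀ x y : X, r (x, y) = (x * φ y, 1)) :
    YB r ∧ (∀ x : X, Function.Bijective (lam r x)) ∧ r ∘ r = r ∧
    (∀ a b c : StrMon r, (a * b = a * c → b = c) ∧ (b * a = c * a → b = c)) := by
  refine ⟨?_, ?_, ?_, ?_⟩
  · funext p
    obtain ⟨a, b, c⟩ := p
    simp [YB, rl, rr, hr, mul_assoc]
  · intro x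
    constructor
    · intro a b h
      have h2 : x * φ a = x * φ b := by simpa [lam, hr] using h
      exact φ.injective (mul_left_cancel h2)
    · intro y
      exact ⟨φ.symm (x⁻¹ * y), by simp [lam, hr]⟩
  · funext p
    obtain ⟨x, y⟩ := p
    simp [hr]
  · intro a b c
    obtain ⟨wa, rfl⟩ := Con.mk'_surjective a
    obtain ⟨wb, rfl⟩ := Con.mk'_surjective b
    obtain ⟨wc, rfl⟩ := Con.mk'_surjective c
    have key : ∀ u v : FreeMonoid X,
        (conGen (structRel r)).mk' u = (conGen (structRel r)).mk' v →
          fhom φ u = fhom φ v := by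
      intro u v huv
      exact ker_le φ hr ((Con.eq _).mp huv)
    constructor
    · intro h
      rw [← map_mul, ← map_mul] at h
      have h2 := key _ _ h
      rw [map_mul, map_mul] at h2
      have h3 := mul_left_cancel h2
      exact (Con.eq _).mpr (fhom_inj φ hr _ _ h3)
    · intro h
      rw [← map_mul, ← map_mul] at h
      have h2 := key _ _ h
      rw [map_mul, map_mul] at h2
      have h3 := mul_right_cancel h2
      exact (Con.eq _).mpr (fhom_inj φ hr _ _ h3)
end
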